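/- arXiv:1807.10832 — 11 statements merged into one kernel-verified Lean document; each statement's English description precedes it below -/
import Mathlib

section
/- Let F : ℝⁿ → ℝ be differentiable with L-Lipschitz continuous gradient (L > 0), let G : ℝⁿ → ℝ be differentiable and γ-strongly convex (γ > 0), and let x₀, x̂ ∈ ℝⁿ satisfy ∇G(x₀) = ∇F(x₀) and G(x̂) ≤ G(x₀). Then for every η ∈ (0,1) and every α with 0 < α ≤ min{1, γ(1−η)/L}, the Armijo condition F(x₀ + α(x̂ − x₀)) ≤ F(x₀) + η α ⟨∇F(x₀), x̂ − x₀⟩ holds. -/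
/-!
Put `d = x̂ - x₀`. Strong convexity of `G` and `∇G(x₀) = ∇F(x₀)` give
`G(x̂) ≥ G(x₀) + ⟨∇F(x₀), d⟩ + γ/2 ‖d‖²`, so `G(x̂) ≤ G(x₀)` forces `⟨∇F(x₀), d⟩ ≤ -γ/2 ‖d‖²`.
The descent lemma for the `L`-smooth `F` bounds `F(x₀ + αd)` by
`F(x₀) + α⟨∇F(x₀), d⟩ + Lα²/2 ‖d‖²`, and `Lα ≤ γ(1 - η)` lets the fraction `1 - η` of the
linear term absorb the quadratic one.
-/

open Set AffineMap
open scoped RealInnerProductSpace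

section FirstOrder

variable {E : Type*} [NormedAddCommGroup E]

lemma ConvexOn.apply_sub_le_of_hasFDerivAt [NormedSpace ℝ E] {f : E → ℝ} {f' : E →L[ℝ] ℝ}
    {x : E} (hf : ConvexOn ℝ univ f) (hf' : HasFDerivAt f f' x) (y : E) :
    f' (y - x) ≤ f y - f x := by
  have hline : ConvexOn ℝ univ (f ∘ (lineMap x y : ℝ → E)) := by
    simpa using hf.comp_affineMap (lineMap x y)
  have hderiv : HasDerivAt (f ∘ (lineMap x y : ℝ → E)) (f' (y - x)) 0 := by
    rw [← lineMap_apply_zero (k := ℝ) x y] at hf'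
    exact hf'.comp_hasDerivAt 0 hasDerivAt_lineMap
  simpa [slope_def_field] using
    hline.le_slope_of_hasDerivAt (mem_univ 0) (mem_univ 1) one_pos hderiv

variable [InnerProductSpace ℝ E]

lemma StrongConvexOn.add_apply_sub_add_le_of_hasFDerivAt {f : E → ℝ} {f' : E →L[ℝ] ℝ}
    {m : ℝ} {x : E} (hf : StrongConvexOn univ m f) (hf' : HasFDerivAt f f' x) (y : E) :
    f x + f' (y - x) + m / 2 * ‖y - x‖ ^ 2 ≤ f y := by
  have hg := (strongConvexOn_iff_convex.mp hf).apply_sub_le_of_hasFDerivAt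
    (hf'.sub ((hasStrictFDerivAt_norm_sq x).hasFDerivAt.const_mul (m / 2))) y
  have hsq : ‖y - x‖ ^ 2 = ‖y‖ ^ 2 - ‖x‖ ^ 2 - 2 * ⟪x, y - x⟫ := by
    rw [norm_sub_sq_real, inner_sub_right, real_inner_self_eq_norm_sq, real_inner_comm]; ring
  simp only [sub_apply, smul_apply, innerSL_apply_apply,
    smul_eq_mul, nsmul_eq_mul] at hg
  rw [hsq]
  linarith

end FirstOrder

section Descent

variable {E : Type*} [NormedAddCommGroup E] [InnerProductSpace ℝ E] [CompleteSpace E]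

lemma DifferentiableAt.hasDerivAt_comp_lineMap {f : E → ℝ} {x y : E} {t : ℝ}
    (hf : DifferentiableAt ℝ f (lineMap x y t)) :
    HasDerivAt (f ∘ lineMap x y) ⟪gradient f (lineMap x y t), y - x⟫ t := by
  simpa only [HasGradientAt, InnerProductSpace.toDual_apply_apply] using
    hf.hasGradientAt.hasFDerivAt.comp_hasDerivAt t hasDerivAt_lineMap

lemma le_add_inner_gradient_add_sq_of_lipschitz_gradient {f : E → ℝ} {L : ℝ}
    (hf : Differentiable ℝ f)
    (hLip : ∀ x y, ‖gradient f x - gradient f y‖ ≤ L * ‖x - y‖) (x y : E) :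
    f y ≤ f x + ⟪gradient f x, y - x⟫ + L / 2 * ‖y - x‖ ^ 2 := by
  set K := ⟪gradient f x, y - x⟫
  set D := ‖y - x‖ ^ 2
  -- The quadratic model minus `f` along the segment; its derivative is nonnegative for `t ≥ 0`.
  let ψ : ℝ → ℝ := fun t => t * K + L / 2 * t ^ 2 * D - (f ∘ lineMap x y) t
  have hψ (t : ℝ) : HasDerivAt ψ (K + L * t * D - ⟪gradient f (lineMap x y t), y - x⟫) t := by
    refine HasDerivAt.congr_deriv ((((hasDerivAt_id t).mul_const K).add
      (((hasDerivAt_pow 2 t).const_mul (L / 2)).mul_const D)).sub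
      (hf _).hasDerivAt_comp_lineMap) ?_
    ring
  have hgrad_incr (t : ℝ) (ht : 0 ≤ t) :
      ⟪gradient f (lineMap x y t), y - x⟫ - K ≤ L * t * D := by
    have hdist : ‖lineMap x y t - x‖ = t * ‖y - x‖ := by
      rw [← vsub_eq_sub, lineMap_vsub_left, norm_smul, Real.norm_of_nonneg ht, vsub_eq_sub]
    calc ⟪gradient f (lineMap x y t), y - x⟫ - K
        = ⟪gradient f (lineMap x y t) - gradient f x, y - x⟫ := (inner_sub_left ..).symm
      _ ≤ ‖gradient f (lineMap x y t) - gradient f x‖ * ‖y - x‖ := real_inner_le_norm ..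
      _ ≤ L * ‖lineMap x y t - x‖ * ‖y - x‖ := by gcongr; exact hLip _ _
      _ = L * t * D := by rw [hdist]; ring
  have hmono : MonotoneOn ψ (Ici 0) :=
    monotoneOn_of_hasDerivWithinAt_nonneg (convex_Ici 0)
      (fun t _ => (hψ t).continuousAt.continuousWithinAt)
      (fun t _ => (hψ t).hasDerivWithinAt)
      (fun t ht => by linarith [hgrad_incr t (interior_Ici.subset ht).le])
  have := hmono self_mem_Ici (mem_Ici.mpr zero_le_one) zero_le_one
  simp only [ψ, Function.comp_apply, lineMap_apply_zero, lineMap_apply_one] at this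
  linarith

end Descent

theorem stmt_0_general {n : ℕ}
    (F G : EuclideanSpace ℝ (Fin n) → ℝ) (L γ : ℝ) (hL : 0 < L)
    (hF : Differentiable ℝ F)
    (hFLip : ∀ x y, ‖gradient F x - gradient F y‖ ≤ L * ‖x - y‖)
    (hG : Differentiable ℝ G)
    (hGsc : ConvexOn ℝ Set.univ (fun x => G x - γ / 2 * ‖x‖ ^ 2))
    (x₀ xh : EuclideanSpace ℝ (Fin n))
    (hgrad : gradient G x₀ = gradient F x₀)
    (hGle : G xh ≤ G x₀)
    (η : ℝ) (hη : η ∈ Set.Ioo (0 : ℝ) 1)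
    (α : ℝ) (hα0 : 0 < α) (hα : α ≤ min 1 (γ * (1 - η) / L)) :
    F (x₀ + α • (xh - x₀)) ≤
      F x₀ + η * α * (inner ℝ (gradient F x₀) (xh - x₀) : ℝ) := by
  set d := xh - x₀
  have hdir : ⟪gradient F x₀, d⟫ ≤ -(γ / 2) * ‖d‖ ^ 2 := by
    have := (strongConvexOn_iff_convex.mpr hGsc).add_apply_sub_add_le_of_hasFDerivAt
      (hG x₀).hasFDerivAt xh
    rw [← inner_gradient_left, hgrad] at this
    linarith
  have hstep : L * α ≤ γ * (1 - η) := by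
    rw [le_min_iff, le_div_iff₀ hL] at hα
    linarith
  have hdesc := le_add_inner_gradient_add_sq_of_lipschitz_gradient hF hFLip x₀ (x₀ + α • d)
  rw [add_sub_cancel_left, real_inner_smul_right, norm_smul, Real.norm_of_nonneg hα0.le] at hdesc
  have h1η : 0 ≤ (1 - η) * α := mul_nonneg (by linarith [hη.2]) hα0.le
  calc F (x₀ + α • d)
      ≤ F x₀ + α * ⟪gradient F x₀, d⟫ + L / 2 * (α * ‖d‖) ^ 2 := hdesc
    _ = F x₀ + η * α * ⟪gradient F x₀, d⟫
          + ((1 - η) * α * ⟪gradient F x₀, d⟫ + L * α * (α * ‖d‖ ^ 2) / 2) := by ring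
    _ ≤ F x₀ + η * α * ⟪gradient F x₀, d⟫
          + ((1 - η) * α * (-(γ / 2) * ‖d‖ ^ 2) + γ * (1 - η) * (α * ‖d‖ ^ 2) / 2) := by
      gcongr
    _ = F x₀ + η * α * ⟪gradient F x₀, d⟫ := by ring

theorem stmt_0 {n : ℕ}
    (F G : EuclideanSpace ℝ (Fin n) → ℝ) (L γ : ℝ) (hL : 0 < L) (hγ : 0 < γ)
    (hF : Differentiable ℝ F)
    (hFLip : ∀ x y, ‖gradient F x - gradient F y‖ ≤ L * ‖x - y‖)
    (hG : Differentiable ℝ G)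
    (hGsc : ConvexOn ℝ Set.univ (fun x => G x - γ / 2 * ‖x‖ ^ 2))
    (x₀ xh : EuclideanSpace ℝ (Fin n))
    (hgrad : gradient G x₀ = gradient F x₀)
    (hGle : G xh ≤ G x₀)
    (η : ℝ) (hη : η ∈ Set.Ioo (0 : ℝ) 1)
    (α : ℝ) (hα0 : 0 < α) (hα : α ≤ min 1 (γ * (1 - η) / L)) :
    F (x₀ + α • (xh - x₀)) ≤
      F x₀ + η * α * (inner ℝ (gradient F x₀) (xh - x₀) : ℝ) :=
  stmt_0_general F G L γ hL hF hFLip hG hGsc x₀ xh hgrad hGle η hη α hα0 hα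
end

section
/- Let F : ℝⁿ → ℝ be differentiable with L-Lipschitz continuous gradient (L > 0), let G : ℝⁿ → ℝ be differentiable and γ-strongly convex (γ > 0), and let x₀, x̂ ∈ ℝⁿ satisfy ∇G(x₀) = ∇F(x₀) and G(x̂) ≤ G(x₀). Then for every η ∈ (0,1) and δ ∈ (0,1) there exists a nonnegative integer j such that α = δʲ satisfies both the Armijo condition F(x₀ + α(x̂ − x₀)) ≤ F(x₀) + η α ⟨∇F(x₀), x̂ − x₀⟩ and the lower bound α ≥ min{1, δγ(1−η)/L}. -/
/-!
The Lipschitz bound on `∇F` gives the descent lemma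
`F (x₀ + α d) ≤ F x₀ + α ⟪∇F x₀, d⟫ + L α² ‖d‖² / 2` for `d = x̂ - x₀`, and strong convexity of `G`
together with `∇G x₀ = ∇F x₀` and `G x̂ ≤ G x₀` makes `d` a descent direction of slope
`⟪∇F x₀, d⟫ ≤ -γ ‖d‖² / 2`. Combining the two, every step `α ≤ γ (1 - η) / L` satisfies the Armijo
condition, and backtracking from `1` by the factor `δ` stops at such a step no smaller than
`min 1 (δ γ (1 - η) / L)`.
-/

open Set
open scoped Gradient RealInnerProductSpace

section Gradient

variable {E : Type*} [NormedAddCommGroup E] [InnerProductSpace ℝ E] [CompleteSpace E]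
  {f : E → ℝ} {g x d : E}

theorem HasGradientAt.hasDerivAt_add_smul {t : ℝ} (hf : HasGradientAt f g (x + t • d)) :
    HasDerivAt (fun s : ℝ => f (x + s • d)) ⟪g, d⟫ t := by
  have hline : HasDerivAt (fun s : ℝ => x + s • d) d t := by
    simpa using ((hasDerivAt_id t).smul_const d).const_add x
  have h := (hasGradientAt_iff_hasFDerivAt.1 hf).comp_hasDerivAt t hline
  simp only [InnerProductSpace.toDual_apply_apply] at h
  exact h

theorem StrongConvexOn.add_inner_add_sq_le {m : ℝ} (hf : StrongConvexOn univ m f)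
    (hg : HasGradientAt f g x) (y : E) :
    f x + ⟪g, y - x⟫ + m / 2 * ‖y - x‖ ^ 2 ≤ f y := by
  set ψ : ℝ → ℝ := fun t => f (x + t • (y - x)) - m / 2 * ‖x + t • (y - x)‖ ^ 2
  have hψ : ConvexOn ℝ univ ψ := by
    have h := (strongConvexOn_iff_convex.1 hf).comp_affineMap (AffineMap.lineMap x y)
    rw [preimage_univ] at h
    have hψ_eq : ψ = (fun z => f z - m / 2 * ‖z‖ ^ 2) ∘ AffineMap.lineMap x y := by
      ext t
      simp [ψ, AffineMap.lineMap_apply, add_comm]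
    rwa [hψ_eq]
  have hψ' : HasDerivAt ψ (⟪g, y - x⟫ - m / 2 * (2 * ⟪x, y - x⟫)) 0 := by
    have hline : HasDerivAt (fun t : ℝ => x + t • (y - x)) (y - x) 0 := by
      simpa using ((hasDerivAt_id (0 : ℝ)).smul_const (y - x)).const_add x
    have hf' : HasDerivAt (fun t : ℝ => f (x + t • (y - x))) ⟪g, y - x⟫ 0 :=
      HasGradientAt.hasDerivAt_add_smul (by rwa [zero_smul, add_zero])
    have h := hf'.sub (hline.norm_sq.const_mul (m / 2))
    simp only [zero_smul, add_zero] at h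
    exact h
  have hslope := hψ.le_slope_of_hasDerivAt (mem_univ 0) (mem_univ 1) one_pos hψ'
  simp only [slope_def_field, ψ, sub_zero, div_one, one_smul, zero_smul, add_zero,
    add_sub_cancel] at hslope
  rw [inner_sub_right x y x, real_inner_self_eq_norm_sq] at hslope
  rw [norm_sub_sq_real, real_inner_comm x y]
  linarith

/-- The descent lemma. -/
theorem le_add_inner_gradient_add_sq_of_lipschitz {L : ℝ} (hf : Differentiable ℝ f)
    (hLip : ∀ y, ‖∇ f y - ∇ f x‖ ≤ L * ‖y - x‖) (d : E) :
    f (x + d) ≤ f x + ⟪∇ f x, d⟫ + L / 2 * ‖d‖ ^ 2 := by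
  set A := ⟪∇ f x, d⟫
  set χ : ℝ → ℝ := fun t => f (x + t • d) - t * A - L / 2 * t ^ 2 * ‖d‖ ^ 2
  have hχ' : ∀ t : ℝ, HasDerivAt χ (⟪∇ f (x + t • d), d⟫ - A - L * t * ‖d‖ ^ 2) t := by
    intro t
    have hquad := ((hasDerivAt_pow 2 t).const_mul (L / 2)).mul_const (‖d‖ ^ 2)
    refine ((((hf _).hasGradientAt.hasDerivAt_add_smul).sub
      ((hasDerivAt_id t).mul_const A)).sub hquad).congr_deriv ?_
    simp only [one_mul, Nat.cast_ofNat]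
    ring
  have hχ'_nonpos : ∀ t ∈ Ioo (0 : ℝ) 1, ⟪∇ f (x + t • d), d⟫ - A - L * t * ‖d‖ ^ 2 ≤ 0 := by
    intro t ht
    refine sub_nonpos.2 ?_
    calc ⟪∇ f (x + t • d), d⟫ - A = ⟪∇ f (x + t • d) - ∇ f x, d⟫ := (inner_sub_left ..).symm
      _ ≤ ‖∇ f (x + t • d) - ∇ f x‖ * ‖d‖ := real_inner_le_norm _ _
      _ ≤ L * ‖t • d‖ * ‖d‖ := by gcongr; simpa using hLip (x + t • d)
      _ = L * t * ‖d‖ ^ 2 := by rw [norm_smul, Real.norm_of_nonneg ht.1.le]; ring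
  have hanti : AntitoneOn χ (Icc 0 1) :=
    antitoneOn_of_hasDerivWithinAt_nonpos (convex_Icc 0 1)
      (fun t _ => (hχ' t).continuousAt.continuousWithinAt)
      (fun t _ => (hχ' t).hasDerivWithinAt)
      (fun t ht => hχ'_nonpos t (by rwa [interior_Icc] at ht))
  have h := hanti (left_mem_Icc.2 zero_le_one) (right_mem_Icc.2 zero_le_one) zero_le_one
  norm_num [χ] at h
  linarith

theorem armijo_condition_of_mul_le {L γ η α : ℝ} (hf : Differentiable ℝ f)
    (hLip : ∀ y, ‖∇ f y - ∇ f x‖ ≤ L * ‖y - x‖)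
    (hd : ⟪∇ f x, d⟫ ≤ -(γ / 2) * ‖d‖ ^ 2) (hη : η ≤ 1) (hα : 0 ≤ α)
    (hαL : L * α ≤ γ * (1 - η)) :
    f (x + α • d) ≤ f x + η * α * ⟪∇ f x, d⟫ := by
  have hdesc := le_add_inner_gradient_add_sq_of_lipschitz hf hLip (α • d)
  rw [real_inner_smul_right, norm_smul, Real.norm_of_nonneg hα] at hdesc
  nlinarith [mul_le_mul_of_nonneg_left hd (mul_nonneg (sub_nonneg.2 hη) hα),
    mul_le_mul_of_nonneg_right hαL (by positivity : 0 ≤ α * ‖d‖ ^ 2)]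

end Gradient

theorem exists_pow_mem_Icc_min_one_mul {c δ : ℝ} (hc : 0 < c) (hδ₀ : 0 < δ) (hδ₁ : δ < 1) :
    ∃ j : ℕ, δ ^ j ∈ Icc (min 1 (δ * c)) c := by
  rcases le_or_gt 1 c with hc₁ | hc₁
  · exact ⟨0, by simpa using hc₁⟩
  · obtain ⟨j, hlt, hle⟩ := exists_nat_pow_near_of_lt_one hc hc₁.le hδ₀ hδ₁
    refine ⟨j + 1, (min_le_right _ _).trans ?_, hlt.le⟩
    rw [pow_succ']
    exact mul_le_mul_of_nonneg_left hle hδ₀.le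

theorem stmt_1 {n : ℕ}
    (F G : EuclideanSpace ℝ (Fin n) → ℝ) (L γ : ℝ) (hL : 0 < L) (hγ : 0 < γ)
    (hF : Differentiable ℝ F)
    (hFLip : ∀ x y, ‖gradient F x - gradient F y‖ ≤ L * ‖x - y‖)
    (hG : Differentiable ℝ G)
    (hGsc : ConvexOn ℝ Set.univ (fun x => G x - γ / 2 * ‖x‖ ^ 2))
    (x₀ xh : EuclideanSpace ℝ (Fin n))
    (hgrad : gradient G x₀ = gradient F x₀)
    (hGle : G xh ≤ G x₀)
    (η δ : ℝ) (hη : η ∈ Set.Ioo (0 : ℝ) 1) (hδ : δ ∈ Set.Ioo (0 : ℝ) 1) :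
    ∃ j : ℕ,
      F (x₀ + δ ^ j • (xh - x₀)) ≤
        F x₀ + η * δ ^ j * (inner ℝ (gradient F x₀) (xh - x₀) : ℝ) ∧
      min 1 (δ * γ * (1 - η) / L) ≤ δ ^ j := by
  have hdescent : ⟪∇ F x₀, xh - x₀⟫ ≤ -(γ / 2) * ‖xh - x₀‖ ^ 2 := by
    have h := (strongConvexOn_iff_convex.2 hGsc).add_inner_add_sq_le (hG x₀).hasGradientAt xh
    rw [hgrad] at h
    linarith
  have hc : 0 < γ * (1 - η) / L := div_pos (mul_pos hγ (sub_pos.2 hη.2)) hL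
  obtain ⟨j, hj_ge, hj_le⟩ := exists_pow_mem_Icc_min_one_mul hc hδ.1 hδ.2
  refine ⟨j, armijo_condition_of_mul_le hF (fun y => hFLip y x₀) hdescent hη.2.le (pow_pos hδ.1 j).le
    ((le_div_iff₀' hL).1 hj_le), ?_⟩
  rwa [show δ * γ * (1 - η) / L = δ * (γ * (1 - η) / L) by ring]
end

section
/- Let F : ℝⁿ → ℝ be differentiable at x₀, let G : ℝⁿ → ℝ be differentiable and γ-strongly convex (γ > 0), and suppose ∇G(x₀) = ∇F(x₀) and G(x̂) ≤ G(x₀) for some x̂ ∈ ℝⁿ. Then ⟨∇F(x₀), x̂ − x₀⟩ ≤ G(x̂) − G(x₀) − (γ/2)‖x̂ − x₀‖² ≤ −(γ/2)‖x̂ − x₀‖²; in particular, x̂ − x₀ is a descent direction for F at x₀ whenever x̂ ≠ x₀. -/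
/-!
Along the segment from `x₀` to `x̂` the convex function `G - (γ/2)‖·‖²` lies above its tangent
line, which after expanding `‖x̂‖²` around `x₀` is the strong-convexity inequality
`⟪∇G x₀, x̂ - x₀⟫ ≤ G x̂ - G x₀ - (γ/2)‖x̂ - x₀‖²`; the rest is `∇G x₀ = ∇F x₀` and `G x̂ ≤ G x₀`.
-/

open AffineMap ContinuousLinearMap

theorem ConvexOn.le_sub_of_hasFDerivAt {E : Type*} [NormedAddCommGroup E] [NormedSpace ℝ E]
    {s : Set E} {f : E → ℝ} {f' : E →L[ℝ] ℝ} {x y : E} (hf : ConvexOn ℝ s f)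
    (hx : x ∈ s) (hy : y ∈ s) (hf' : HasFDerivAt f f' x) :
    f' (y - x) ≤ f y - f x := by
  set l : ℝ →ᵃ[ℝ] E := lineMap x y
  have hline : ConvexOn ℝ (l ⁻¹' s) (f ∘ l) := hf.comp_affineMap l
  have hderiv : HasDerivAt (f ∘ l) (f' (y - x)) 0 := by
    refine HasFDerivAt.comp_hasDerivAt (0 : ℝ) ?_ hasDerivAt_lineMap
    simpa [l] using hf'
  simpa [slope, l] using
    hline.le_slope_of_hasDerivAt (x := 0) (y := 1) (by simpa [l] using hx) (by simpa [l] using hy)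
      one_pos hderiv

theorem ConvexOn.inner_le_sub_sub_of_hasGradientAt {E : Type*} [NormedAddCommGroup E]
    [InnerProductSpace ℝ E] [CompleteSpace E] {s : Set E} {f : E → ℝ} {f' : E} {γ : ℝ} {x y : E}
    (hf : ConvexOn ℝ s (fun z => f z - γ / 2 * ‖z‖ ^ 2)) (hx : x ∈ s) (hy : y ∈ s)
    (hf' : HasGradientAt f f' x) :
    inner ℝ f' (y - x) ≤ f y - f x - γ / 2 * ‖y - x‖ ^ 2 := by
  have hderiv := (hasGradientAt_iff_hasFDerivAt.mp hf').sub
    ((hasStrictFDerivAt_norm_sq x).hasFDerivAt.const_mul (γ / 2))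
  have key := hf.le_sub_of_hasFDerivAt hx hy hderiv
  simp only [sub_apply, InnerProductSpace.toDual_apply_apply, smul_apply, coe_innerSL_apply,
    nsmul_eq_mul, Nat.cast_ofNat, smul_eq_mul] at key
  have hnorm : ‖y‖ ^ 2 = ‖x‖ ^ 2 + 2 * inner ℝ x (y - x) + ‖y - x‖ ^ 2 := by
    simpa using norm_add_sq_real x (y - x)
  rw [hnorm] at key
  linarith

theorem stmt_2_general {n : ℕ}
    (F G : EuclideanSpace ℝ (Fin n) → ℝ) (γ : ℝ) (hγ : 0 < γ)
    (x₀ xh : EuclideanSpace ℝ (Fin n))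
    (hG : Differentiable ℝ G)
    (hGsc : ConvexOn ℝ Set.univ (fun x => G x - γ / 2 * ‖x‖ ^ 2))
    (hgrad : gradient G x₀ = gradient F x₀)
    (hGle : G xh ≤ G x₀) :
    (inner ℝ (gradient F x₀) (xh - x₀) : ℝ) ≤ G xh - G x₀ - γ / 2 * ‖xh - x₀‖ ^ 2 ∧
    G xh - G x₀ - γ / 2 * ‖xh - x₀‖ ^ 2 ≤ -(γ / 2) * ‖xh - x₀‖ ^ 2 ∧
    (xh ≠ x₀ → (inner ℝ (gradient F x₀) (xh - x₀) : ℝ) < 0) := by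
  have hfirst : inner ℝ (gradient F x₀) (xh - x₀) ≤ G xh - G x₀ - γ / 2 * ‖xh - x₀‖ ^ 2 :=
    hgrad ▸ hGsc.inner_le_sub_sub_of_hasGradientAt (Set.mem_univ _) (Set.mem_univ _)
      (hG x₀).hasGradientAt
  refine ⟨hfirst, by linarith, fun hne => ?_⟩
  have hpos : 0 < ‖xh - x₀‖ ^ 2 := by positivity [sub_ne_zero_of_ne hne]
  linarith [mul_pos (half_pos hγ) hpos]

theorem stmt_2 {n : ℕ}
    (F G : EuclideanSpace ℝ (Fin n) → ℝ) (γ : ℝ) (hγ : 0 < γ)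
    (x₀ xh : EuclideanSpace ℝ (Fin n))
    (hF : DifferentiableAt ℝ F x₀)
    (hG : Differentiable ℝ G)
    (hGsc : ConvexOn ℝ Set.univ (fun x => G x - γ / 2 * ‖x‖ ^ 2))
    (hgrad : gradient G x₀ = gradient F x₀)
    (hGle : G xh ≤ G x₀) :
    (inner ℝ (gradient F x₀) (xh - x₀) : ℝ) ≤ G xh - G x₀ - γ / 2 * ‖xh - x₀‖ ^ 2 ∧
    G xh - G x₀ - γ / 2 * ‖xh - x₀‖ ^ 2 ≤ -(γ / 2) * ‖xh - x₀‖ ^ 2 ∧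
    (xh ≠ x₀ → (inner ℝ (gradient F x₀) (xh - x₀) : ℝ) < 0) :=
  stmt_2_general F G γ hγ x₀ xh hG hGsc hgrad hGle
end

section
/- Let F : ℝⁿ → ℝ be differentiable at x₀, let G : ℝⁿ → ℝ be differentiable and γ-strongly convex (γ > 0), and suppose ∇G(x₀) = ∇F(x₀) and G(x̂) ≤ G(x₀) for some x̂ ∈ ℝⁿ. If for some η ∈ (0,1) and α > 0 the Armijo condition F(x₀ + α(x̂ − x₀)) ≤ F(x₀) + η α ⟨∇F(x₀), x̂ − x₀⟩ holds, then F(x₀ + α(x̂ − x₀)) ≤ F(x₀) − η α (γ/2) ‖x̂ − x₀‖². -/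
/-!
Restricting the convex function `G - (γ/2)‖·‖²` to the segment from `x₀` to `x̂` gives the
first-order bound `G x̂ ≥ G x₀ + ⟪∇G x₀, x̂ - x₀⟫ + (γ/2)‖x̂ - x₀‖²`. Since `G x̂ ≤ G x₀` and
`∇G x₀ = ∇F x₀`, this says `⟪∇F x₀, x̂ - x₀⟫ ≤ -(γ/2)‖x̂ - x₀‖²`, which turns the Armijo
inequality into the claimed decrease.
-/

open scoped RealInnerProductSpace

section FirstOrder

variable {E : Type*} [NormedAddCommGroup E]

theorem ConvexOn.add_fderiv_sub_le [NormedSpace ℝ E] {f : E → ℝ} {f' : E →L[ℝ] ℝ} {x : E}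
    (hf : ConvexOn ℝ Set.univ f) (hf' : HasFDerivAt f f' x) (y : E) :
    f x + f' (y - x) ≤ f y := by
  have hline : HasDerivAt (fun t : ℝ => x + t • (y - x)) (y - x) 0 := by
    simpa using ((hasDerivAt_id (0 : ℝ)).smul_const (y - x)).const_add x
  have hrestrict : ConvexOn ℝ Set.univ (fun t : ℝ => f (x + t • (y - x))) := by
    simpa [Function.comp_def, AffineMap.lineMap_apply, add_comm]
      using hf.comp_affineMap (AffineMap.lineMap x y)
  have hderiv : HasDerivAt (fun t : ℝ => f (x + t • (y - x))) (f' (y - x)) 0 :=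
    (by simpa using hf' : HasFDerivAt f f' (x + (0 : ℝ) • (y - x))).comp_hasDerivAt 0 hline
  have hslope := hrestrict.le_slope_of_hasDerivAt (Set.mem_univ 0) (Set.mem_univ 1) one_pos hderiv
  simp only [slope_def_field, zero_smul, add_zero, one_smul, add_sub_cancel, sub_zero,
    div_one] at hslope
  linarith

variable [InnerProductSpace ℝ E] [CompleteSpace E]

theorem StrongConvexOn.add_inner_add_sq_le_of_hasGradientAt {f : E → ℝ} {g x : E} {γ : ℝ}
    (hf : StrongConvexOn Set.univ γ f) (hg : HasGradientAt f g x) (y : E) :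
    f x + ⟪g, y - x⟫ + γ / 2 * ‖y - x‖ ^ 2 ≤ f y := by
  have hsub : HasFDerivAt (fun z => f z - γ / 2 * ‖z‖ ^ 2)
      (InnerProductSpace.toDual ℝ E g - (γ / 2) • 2 • innerSL ℝ x) x :=
    hg.hasFDerivAt.sub ((hasStrictFDerivAt_norm_sq x).hasFDerivAt.const_mul (γ / 2))
  have hfirst := (strongConvexOn_iff_convex.mp hf).add_fderiv_sub_le hsub y
  have hy : ‖y‖ ^ 2 = ‖x‖ ^ 2 + 2 * ⟪x, y - x⟫ + ‖y - x‖ ^ 2 := by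
    rw [← norm_add_sq_real, add_sub_cancel]
  simp only [sub_apply, smul_apply, InnerProductSpace.toDual_apply_apply, innerSL_apply_apply,
    smul_eq_mul, nsmul_eq_mul, Nat.cast_ofNat] at hfirst
  linear_combination hfirst - γ / 2 * hy

theorem StrongConvexOn.inner_gradient_le_of_le {f : E → ℝ} {g x y : E} {γ : ℝ}
    (hf : StrongConvexOn Set.univ γ f) (hg : HasGradientAt f g x) (hxy : f y ≤ f x) :
    ⟪g, y - x⟫ ≤ -(γ / 2 * ‖y - x‖ ^ 2) := by
  linarith [hf.add_inner_add_sq_le_of_hasGradientAt hg y]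

end FirstOrder

theorem stmt_3_general {n : ℕ}
    (F G : EuclideanSpace ℝ (Fin n) → ℝ) (γ : ℝ)
    (x₀ xh : EuclideanSpace ℝ (Fin n))
    (hG : Differentiable ℝ G)
    (hGsc : ConvexOn ℝ Set.univ (fun x => G x - γ / 2 * ‖x‖ ^ 2))
    (hgrad : gradient G x₀ = gradient F x₀)
    (hGle : G xh ≤ G x₀)
    (η α : ℝ) (hη : η ∈ Set.Ioo (0 : ℝ) 1) (hα : 0 < α)
    (harmijo : F (x₀ + α • (xh - x₀)) ≤
      F x₀ + η * α * (inner ℝ (gradient F x₀) (xh - x₀) : ℝ)) :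
    F (x₀ + α • (xh - x₀)) ≤ F x₀ - η * α * (γ / 2) * ‖xh - x₀‖ ^ 2 := by
  have hdescent : ⟪gradient F x₀, xh - x₀⟫ ≤ -(γ / 2 * ‖xh - x₀‖ ^ 2) := by
    rw [← hgrad]
    exact (strongConvexOn_iff_convex.mpr hGsc).inner_gradient_le_of_le
      (hG x₀).hasGradientAt hGle
  have hηα : 0 ≤ η * α := mul_nonneg hη.1.le hα.le
  calc F (x₀ + α • (xh - x₀)) ≤ F x₀ + η * α * ⟪gradient F x₀, xh - x₀⟫ := harmijo
    _ ≤ F x₀ + η * α * -(γ / 2 * ‖xh - x₀‖ ^ 2) := by gcongr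
    _ = F x₀ - η * α * (γ / 2) * ‖xh - x₀‖ ^ 2 := by ring

theorem stmt_3 {n : ℕ}
    (F G : EuclideanSpace ℝ (Fin n) → ℝ) (γ : ℝ) (hγ : 0 < γ)
    (x₀ xh : EuclideanSpace ℝ (Fin n))
    (hF : DifferentiableAt ℝ F x₀)
    (hG : Differentiable ℝ G)
    (hGsc : ConvexOn ℝ Set.univ (fun x => G x - γ / 2 * ‖x‖ ^ 2))
    (hgrad : gradient G x₀ = gradient F x₀)
    (hGle : G xh ≤ G x₀)
    (η α : ℝ) (hη : η ∈ Set.Ioo (0 : ℝ) 1) (hα : 0 < α)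
    (harmijo : F (x₀ + α • (xh - x₀)) ≤
      F x₀ + η * α * (inner ℝ (gradient F x₀) (xh - x₀) : ℝ)) :
    F (x₀ + α • (xh - x₀)) ≤ F x₀ - η * α * (γ / 2) * ‖xh - x₀‖ ^ 2 :=
  stmt_3_general F G γ x₀ xh hG hGsc hgrad hGle η α hη hα harmijo
end

section
/- Under the ACQUIRE hypotheses, the sequence {x⁽ᵏ⁾} is bounded and has a subsequence converging to a point x̄ ∈ S that minimizes F over S; moreover, every limit point of {x⁽ᵏ⁾} belongs to S and minimizes F over S. -/
open Filter Topology Set Bornology InnerProductSpace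
open scoped RealInnerProductSpace

/-!
The strongly convex model makes `x̂ᵏ - xᵏ` a descent direction,
`⟪∇F xᵏ, x̂ᵏ - xᵏ⟫ ≤ -γ/2 ‖x̂ᵏ - xᵏ‖²`, so each Armijo step decreases `F` by at least
`η ᾱ γ/2 ‖x̂ᵏ - xᵏ‖²`. Hence the iterates stay in a sublevel set of the coercive `F`, and as `F`
is bounded below the steps `x̂ᵏ - xᵏ`, and with them `x̄ᵏ - xᵏ`, tend to zero. At a limit point
`x̃`, the variational inequality of the models at their minimizers `x̄ᵏ`, perturbed by the
`M`-Lipschitz error of `∇Fₖ` between `x̄ᵏ` and `xᵏ`, becomes `⟪∇F x̃, z - x̃⟫ ≥ 0` for all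
`z ∈ S`, which characterises the minimizers of the convex `F` on `S`.
-/

theorem ConvexOn.add_le_of_hasFDerivAt {E : Type*} [NormedAddCommGroup E] [NormedSpace ℝ E]
    {f : E → ℝ} {f' : E →L[ℝ] ℝ} {p : E}
    (hf : ConvexOn ℝ univ f) (hf' : HasFDerivAt f f' p) (q : E) : f p + f' (q - p) ≤ f q := by
  have hline : ConvexOn ℝ univ (f ∘ AffineMap.lineMap (k := ℝ) p q) := by
    simpa using hf.comp_affineMap (AffineMap.lineMap p q)
  have hderiv : HasDerivAt (f ∘ AffineMap.lineMap (k := ℝ) p q) (f' (q - p)) 0 :=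
    hf'.comp_hasDerivAt_of_eq 0 AffineMap.hasDerivAt_lineMap (by simp)
  have := hline.le_slope_of_hasDerivAt (mem_univ 0) (mem_univ 1) zero_lt_one hderiv
  simp only [slope_def_field, Function.comp_apply, AffineMap.lineMap_apply_one,
    AffineMap.lineMap_apply_zero, sub_zero, div_one] at this
  linarith

section Gradient

variable {E : Type*} [NormedAddCommGroup E] [InnerProductSpace ℝ E] [CompleteSpace E]

theorem ConvexOn.add_inner_gradient_le {f : E → ℝ} {p : E} (hf : ConvexOn ℝ univ f)
    (hp : DifferentiableAt ℝ f p) (q : E) : f p + ⟪gradient f p, q - p⟫ ≤ f q :=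
  hf.add_le_of_hasFDerivAt hp.hasGradientAt.hasFDerivAt q

theorem add_inner_gradient_add_sq_le {f : E → ℝ} {γ : ℝ} {p : E}
    (hf : ConvexOn ℝ univ fun z => f z - γ / 2 * ‖z‖ ^ 2) (hp : DifferentiableAt ℝ f p)
    (q : E) : f p + ⟪gradient f p, q - p⟫ + γ / 2 * ‖q - p‖ ^ 2 ≤ f q := by
  have := hf.add_le_of_hasFDerivAt
    (hp.hasGradientAt.hasFDerivAt.sub ((hasStrictFDerivAt_norm_sq p).hasFDerivAt.const_mul _)) q
  have hsq : ‖q - p‖ ^ 2 = ‖q‖ ^ 2 - ‖p‖ ^ 2 - 2 * ⟪p, q - p⟫ := by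
    rw [norm_sub_sq_real, inner_sub_right, real_inner_self_eq_norm_sq, real_inner_comm]; ring
  simp only [sub_apply, smul_apply, toDual_apply_apply, innerSL_apply_apply, smul_eq_mul,
    nsmul_eq_mul] at this
  rw [hsq]
  linear_combination this

theorem IsMinOn.inner_gradient_nonneg {f : E → ℝ} {s : Set E} {p q : E} (h : IsMinOn f s p)
    (hs : Convex ℝ s) (hp : p ∈ s) (hq : q ∈ s) (hfp : DifferentiableAt ℝ f p) :
    0 ≤ ⟪gradient f p, q - p⟫ :=
  h.localize.hasFDerivWithinAt_nonneg hfp.hasGradientAt.hasFDerivAt.hasFDerivWithinAt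
    (sub_mem_posTangentConeAt_of_segment_subset (hs.segment_subset hp hq))

theorem IsMinOn.neg_mul_le_inner_gradient {f : E → ℝ} {s : Set E} {p q : E} {M : ℝ}
    (h : IsMinOn f s p) (hs : Convex ℝ s) (hp : p ∈ s) (hq : q ∈ s)
    (hfp : DifferentiableAt ℝ f p)
    (hLip : ∀ u v, ‖gradient f u - gradient f v‖ ≤ M * ‖u - v‖) (y : E) :
    -(M * ‖y - p‖ * ‖q - p‖) ≤ ⟪gradient f y, q - p⟫ := by
  have hmin := h.inner_gradient_nonneg hs hp hq hfp
  have hdiff : |⟪gradient f y - gradient f p, q - p⟫| ≤ M * ‖y - p‖ * ‖q - p‖ :=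
    (abs_real_inner_le_norm _ _).trans (mul_le_mul_of_nonneg_right (hLip y p) (norm_nonneg _))
  rw [inner_sub_left] at hdiff
  linarith [neg_abs_le (⟪gradient f y, q - p⟫ - ⟪gradient f p, q - p⟫)]

/-- The minimizers `p i` of the models `f i` satisfy the variational inequality of `F` up to the
error `M * ‖y i - p i‖ * ‖q - p i‖`, which vanishes in the limit. -/
theorem isMinOn_of_tendsto {ι : Type*} {l : Filter ι} [l.NeBot]
    {F : E → ℝ} {f : ι → E → ℝ} {s : Set E} {y p : ι → E} {M : ℝ} {a : E}
    (hs : Convex ℝ s) (hF : ConvexOn ℝ univ F) (hFd : Differentiable ℝ F)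
    (hF' : Continuous (gradient F)) (hf : ∀ i, Differentiable ℝ (f i))
    (hfLip : ∀ i u v, ‖gradient (f i) u - gradient (f i) v‖ ≤ M * ‖u - v‖)
    (hgrad : ∀ i, gradient (f i) (y i) = gradient F (y i))
    (hp : ∀ i, p i ∈ s) (hmin : ∀ i, IsMinOn (f i) s (p i))
    (hy : Tendsto y l (𝓝 a)) (hpy : Tendsto p l (𝓝 a)) : IsMinOn F s a := by
  refine isMinOn_iff.2 fun q hq => ?_
  have hlower : Tendsto (fun i => -(M * ‖y i - p i‖ * ‖q - p i‖)) l (𝓝 0) := by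
    simpa using (((hy.sub hpy).norm.const_mul M).mul (tendsto_const_nhds.sub hpy).norm).neg
  have hupper : Tendsto (fun i => ⟪gradient F (y i), q - p i⟫) l (𝓝 ⟪gradient F a, q - a⟫) :=
    ((hF'.tendsto a).comp hy).inner (tendsto_const_nhds.sub hpy)
  have hvi : 0 ≤ ⟪gradient F a, q - a⟫ := le_of_tendsto_of_tendsto' hlower hupper fun i => by
    rw [← hgrad i]
    exact (hmin i).neg_mul_le_inner_gradient hs (hp i) hq (hf i _) (hfLip i) (y i)
  linarith [hF.add_inner_gradient_le (hFd a) q]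

theorem sufficient_decrease_of_armijo {F f : E → ℝ} {x xh : E} {γ η αbar α : ℝ}
    (hf : ConvexOn ℝ univ fun z => f z - γ / 2 * ‖z‖ ^ 2) (hfx : DifferentiableAt ℝ f x)
    (hgrad : gradient f x = gradient F x) (hdec : f xh ≤ f x)
    (hγ : 0 ≤ γ) (hη : 0 ≤ η) (hαbar : 0 ≤ αbar) (hα : αbar ≤ α)
    (harmijo : F (x + α • (xh - x)) ≤ F x + η * α * ⟪gradient F x, xh - x⟫) :
    η * αbar * (γ / 2) * ‖xh - x‖ ^ 2 ≤ F x - F (x + α • (xh - x)) := by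
  have hdescent : ⟪gradient F x, xh - x⟫ ≤ -(γ / 2 * ‖xh - x‖ ^ 2) := by
    linarith [hgrad ▸ add_inner_gradient_add_sq_le hf hfx xh]
  have hηα : 0 ≤ η * α := mul_nonneg hη (hαbar.trans hα)
  have hr : 0 ≤ γ / 2 * ‖xh - x‖ ^ 2 := by positivity
  nlinarith [mul_le_mul_of_nonneg_left hdescent hηα,
    mul_le_mul_of_nonneg_right hα (mul_nonneg hη hr)]

end Gradient

theorem tendsto_zero_of_mul_le_sub_succ {u a : ℕ → ℝ} {c : ℝ} (hc : 0 < c)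
    (hu : BddBelow (range u)) (ha : ∀ k, 0 ≤ a k) (h : ∀ k, c * a k ≤ u k - u (k + 1)) :
    Tendsto a atTop (𝓝 0) := by
  have hanti : Antitone u :=
    antitone_nat_of_succ_le fun k => by linarith [h k, mul_nonneg hc.le (ha k)]
  have hlim := tendsto_atTop_ciInf hanti hu
  have hdiff : Tendsto (fun k => (u k - u (k + 1)) / c) atTop (𝓝 0) := by
    simpa using (hlim.sub (hlim.comp (tendsto_add_atTop_nat 1))).div_const c
  exact squeeze_zero ha (fun k => (le_div_iff₀' hc).2 (h k)) hdiff

theorem isBounded_range_of_antitone_comp {α : Type*} [Bornology α] {f : α → ℝ} {x : ℕ → α}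
    (hf : Tendsto f (cobounded α) atTop) (hx : Antitone (f ∘ x)) : IsBounded (range x) :=
  (isBounded_def.2 <| (hf.eventually_gt_atTop (f (x 0))).mono fun _ hz => not_le.2 hz).subset
    (range_subset_iff.2 fun k => hx (Nat.zero_le k))

theorem Convex.forall_mem_of_add_smul_sub {𝕜 E : Type*} [Ring 𝕜] [PartialOrder 𝕜]
    [IsOrderedRing 𝕜] [AddCommGroup E] [Module 𝕜 E] {s : Set E} {x y : ℕ → E} {t : ℕ → 𝕜}
    (hs : Convex 𝕜 s) (h0 : x 0 ∈ s) (hy : ∀ k, y k ∈ s) (ht : ∀ k, t k ∈ Icc 0 1)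
    (hx : ∀ k, x (k + 1) = x k + t k • (y k - x k)) (k : ℕ) : x k ∈ s := by
  induction k with
  | zero => exact h0
  | succ k ih => exact hx k ▸ hs.add_smul_sub_mem ih (hy k) (ht k)

theorem Continuous.bddBelow_range_of_tendsto_cobounded {α : Type*} [PseudoMetricSpace α]
    [ProperSpace α] [Nonempty α] {f : α → ℝ} (hf : Continuous f)
    (hcoer : Tendsto f (cobounded α) atTop) : BddBelow (range f) := by
  obtain ⟨m, hm⟩ := hf.exists_forall_le (by rwa [← Metric.cobounded_eq_cocompact])
  exact ⟨f m, forall_mem_range.2 hm⟩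

theorem stmt_5_general {n : ℕ}
    (S : Set (EuclideanSpace ℝ (Fin n)))
    (hScl : IsClosed S) (hSconv : Convex ℝ S)
    (F : EuclideanSpace ℝ (Fin n) → ℝ)
    (hFconv : ConvexOn ℝ Set.univ F)
    (hFdiff : Differentiable ℝ F)
    (L : ℝ)
    (hFLip : ∀ u v, ‖gradient F u - gradient F v‖ ≤ L * ‖u - v‖)
    (hFcoer : Filter.Tendsto F (Filter.comap norm Filter.atTop) Filter.atTop)
    (γ η alphaBar M : ℝ) (hγ : 0 < γ) (hη : η ∈ Set.Ioo (0 : ℝ) 1)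
    (halphaBar : 0 < alphaBar)
    (Fk : ℕ → EuclideanSpace ℝ (Fin n) → ℝ)
    (x xb xh : ℕ → EuclideanSpace ℝ (Fin n))
    (ε α : ℕ → ℝ)
    (hFkdiff : ∀ k, Differentiable ℝ (Fk k))
    (hFksc : ∀ k, ConvexOn ℝ Set.univ (fun z => Fk k z - γ / 2 * ‖z‖ ^ 2))
    (hFkLip : ∀ k u v, ‖gradient (Fk k) u - gradient (Fk k) v‖ ≤ M * ‖u - v‖)
    (hgradeq : ∀ k, gradient (Fk k) (x k) = gradient F (x k))
    (hxbS : ∀ k, xb k ∈ S)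
    (hxbmin : ∀ k, ∀ z ∈ S, Fk k (xb k) ≤ Fk k z)
    (hxhS : ∀ k, xh k ∈ S)
    (hxherr : ∀ k, ‖xh k - xb k‖ ≤ ε k)
    (hxhdec : ∀ k, Fk k (xh k) ≤ Fk k (x k))
    (hεlim : Filter.Tendsto ε Filter.atTop (nhds 0))
    (hα : ∀ k, α k ∈ Set.Icc alphaBar 1)
    (harmijo : ∀ k, F (x k + α k • (xh k - x k)) ≤
      F (x k) + η * α k * (inner ℝ (gradient F (x k)) (xh k - x k) : ℝ))
    (hupd : ∀ k, x (k + 1) = x k + α k • (xh k - x k))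
    (hx0 : x 0 ∈ S) :
    Bornology.IsBounded (Set.range x) ∧
    (∃ (φ : ℕ → ℕ) (xbar : EuclideanSpace ℝ (Fin n)), StrictMono φ ∧ xbar ∈ S ∧
      Filter.Tendsto (fun j => x (φ j)) Filter.atTop (nhds xbar) ∧
      ∀ z ∈ S, F xbar ≤ F z) ∧
    (∀ xt : EuclideanSpace ℝ (Fin n),
      (∃ φ : ℕ → ℕ, StrictMono φ ∧
        Filter.Tendsto (fun j => x (φ j)) Filter.atTop (nhds xt)) →
      xt ∈ S ∧ ∀ z ∈ S, F xt ≤ F z) := by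
  rw [comap_norm_atTop] at hFcoer
  have hxS := hSconv.forall_mem_of_add_smul_sub hx0 hxhS
    (fun k => ⟨halphaBar.le.trans (hα k).1, (hα k).2⟩) hupd
  have hdec (k : ℕ) : η * alphaBar * (γ / 2) * ‖xh k - x k‖ ^ 2 ≤ F (x k) - F (x (k + 1)) :=
    hupd k ▸ sufficient_decrease_of_armijo (hFksc k) (hFkdiff k _) (hgradeq k) (hxhdec k)
      hγ.le hη.1.le halphaBar.le (hα k).1 (harmijo k)
  have hc : 0 < η * alphaBar * (γ / 2) := by have := hη.1; positivity
  have hanti : Antitone (F ∘ x) :=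
    antitone_nat_of_succ_le fun k => show F (x (k + 1)) ≤ F (x k) by
      linarith [hdec k, mul_nonneg hc.le (sq_nonneg ‖xh k - x k‖)]
  have hbdd := isBounded_range_of_antitone_comp hFcoer hanti
  have hbelow : BddBelow (range (F ∘ x)) :=
    (hFdiff.continuous.bddBelow_range_of_tendsto_cobounded hFcoer).mono
      (range_comp_subset_range _ _)
  have hstep : Tendsto (fun k => ‖xh k - x k‖) atTop (𝓝 0) := by
    simpa using (tendsto_zero_of_mul_le_sub_succ hc hbelow (fun k => sq_nonneg _) hdec).sqrt
  have hxb : Tendsto (fun k => xb k - x k) atTop (𝓝 0) := by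
    refine squeeze_zero_norm (fun k => ?_) (by simpa using hεlim.add hstep)
    calc ‖xb k - x k‖ ≤ ‖xb k - xh k‖ + ‖xh k - x k‖ := norm_sub_le_norm_sub_add_norm_sub ..
      _ ≤ ε k + ‖xh k - x k‖ := by rw [norm_sub_rev]; gcongr; exact hxherr k
  have hlim (xt) (h : ∃ φ : ℕ → ℕ, StrictMono φ ∧ Tendsto (fun j => x (φ j)) atTop (𝓝 xt)) :
      xt ∈ S ∧ ∀ z ∈ S, F xt ≤ F z := by
    obtain ⟨φ, hφ, hxφ⟩ := h
    have hxbφ : Tendsto (fun j => xb (φ j)) atTop (𝓝 xt) := by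
      simpa using (hxb.comp hφ.tendsto_atTop).add hxφ
    exact ⟨hScl.mem_of_tendsto hxφ (.of_forall fun j => hxS _), isMinOn_iff.1 <|
      isMinOn_of_tendsto hSconv hFconv hFdiff
        (LipschitzWith.of_dist_le' (by simpa [dist_eq_norm] using hFLip)).continuous
        (fun j => hFkdiff (φ j)) (fun j => hFkLip (φ j)) (fun j => hgradeq (φ j))
        (fun j => hxbS (φ j)) (fun j => isMinOn_iff.2 (hxbmin (φ j))) hxφ hxbφ⟩
  obtain ⟨a, -, φ, hφ, hxa⟩ := tendsto_subseq_of_bounded hbdd (mem_range_self ·)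
  exact ⟨hbdd, ⟨φ, a, hφ, hlim a ⟨φ, hφ, hxa⟩ |>.1, hxa, hlim a ⟨φ, hφ, hxa⟩ |>.2⟩, hlim⟩

theorem stmt_5 {n : ℕ}
    (S : Set (EuclideanSpace ℝ (Fin n)))
    (hSne : S.Nonempty) (hScl : IsClosed S) (hSconv : Convex ℝ S)
    (F : EuclideanSpace ℝ (Fin n) → ℝ)
    (hFconv : ConvexOn ℝ Set.univ F)
    (hFdiff : Differentiable ℝ F)
    (L : ℝ) (hL : 0 < L)
    (hFLip : ∀ u v, ‖gradient F u - gradient F v‖ ≤ L * ‖u - v‖)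
    (hFcoer : Filter.Tendsto F (Filter.comap norm Filter.atTop) Filter.atTop)
    (γ η alphaBar M : ℝ) (hγ : 0 < γ) (hη : η ∈ Set.Ioo (0 : ℝ) 1)
    (halphaBar : 0 < alphaBar) (hM : 0 < M)
    (Fk : ℕ → EuclideanSpace ℝ (Fin n) → ℝ)
    (x xb xh : ℕ → EuclideanSpace ℝ (Fin n))
    (ε α : ℕ → ℝ)
    (hFkdiff : ∀ k, Differentiable ℝ (Fk k))
    (hFksc : ∀ k, ConvexOn ℝ Set.univ (fun z => Fk k z - γ / 2 * ‖z‖ ^ 2))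
    (hFkLip : ∀ k u v, ‖gradient (Fk k) u - gradient (Fk k) v‖ ≤ M * ‖u - v‖)
    (hgradeq : ∀ k, gradient (Fk k) (x k) = gradient F (x k))
    (hxbS : ∀ k, xb k ∈ S)
    (hxbmin : ∀ k, ∀ z ∈ S, Fk k (xb k) ≤ Fk k z)
    (hxhS : ∀ k, xh k ∈ S)
    (hxherr : ∀ k, ‖xh k - xb k‖ ≤ ε k)
    (hxhdec : ∀ k, Fk k (xh k) ≤ Fk k (x k))
    (hε : ∀ k, 0 < ε k)
    (hεlim : Filter.Tendsto ε Filter.atTop (nhds 0))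
    (hα : ∀ k, α k ∈ Set.Icc alphaBar 1)
    (harmijo : ∀ k, F (x k + α k • (xh k - x k)) ≤
      F (x k) + η * α k * (inner ℝ (gradient F (x k)) (xh k - x k) : ℝ))
    (hupd : ∀ k, x (k + 1) = x k + α k • (xh k - x k))
    (hx0 : x 0 ∈ S) :
    Bornology.IsBounded (Set.range x) ∧
    (∃ (φ : ℕ → ℕ) (xbar : EuclideanSpace ℝ (Fin n)), StrictMono φ ∧ xbar ∈ S ∧
      Filter.Tendsto (fun j => x (φ j)) Filter.atTop (nhds xbar) ∧
      ∀ z ∈ S, F xbar ≤ F z) ∧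
    (∀ xt : EuclideanSpace ℝ (Fin n),
      (∃ φ : ℕ → ℕ, StrictMono φ ∧
        Filter.Tendsto (fun j => x (φ j)) Filter.atTop (nhds xt)) →
      xt ∈ S ∧ ∀ z ∈ S, F xt ≤ F z) :=
  stmt_5_general S hScl hSconv F hFconv hFdiff L hFLip hFcoer γ η alphaBar M hγ hη halphaBar Fk x xb
    xh ε α hFkdiff hFksc hFkLip hgradeq hxbS hxbmin hxhS hxherr hxhdec hεlim hα harmijo hupd hx0
end

section
/- Under the ACQUIRE hypotheses, if in addition F is strictly convex, then the whole sequence {x⁽ᵏ⁾} converges to the unique minimizer of F over S. -/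
/-!
Since the surrogate `F_k` is `γ`-strongly convex, touches `F` to first order at `x_k` and does
not increase from `x_k` to `x̂_k`, the direction `d_k = x̂_k - x_k` satisfies
`⟪∇F(x_k), d_k⟫ ≤ -(γ/2)‖d_k‖²`; the Armijo rule with `α_k ≥ ᾱ` then gives a sufficient decrease
`F(x_{k+1}) ≤ F(x_k) - ηᾱ(γ/2)‖d_k‖²`. The iterates stay in the sublevel set of `x_0`, which is
compact by coercivity, so `F(x_k)` converges, `d_k → 0` and hence `x̄_k - x_k → 0`.
Along a subsequence converging to `a`, the variational inequalities
`0 ≤ ⟪∇F_k(x̄_k), z - x̄_k⟫` pass to the limit because `∇F_k(x̄_k) - ∇F(x_k) → 0`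
(`∇F_k` is `M`-Lipschitz), so `a` satisfies the optimality condition of the convex `F` on `S`.
Strict convexity makes this minimizer unique, and a sequence in a compact set with a unique
cluster point converges.
-/

open Filter Set Topology RealInnerProductSpace Gradient

section InnerProductSpace

variable {E : Type*} [NormedAddCommGroup E] [InnerProductSpace ℝ E] [CompleteSpace E]
  {s : Set E} {f : E → ℝ} {x y : E}

theorem ConvexOn.add_inner_gradient_le_s6 (hf : ConvexOn ℝ s f) (hx : x ∈ s) (hy : y ∈ s)
    (hfx : DifferentiableAt ℝ f x) : f x + ⟪∇ f x, y - x⟫ ≤ f y := by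
  let ℓ : ℝ →ᵃ[ℝ] E := AffineMap.lineMap x y
  have hline : ConvexOn ℝ (ℓ ⁻¹' s) (f ∘ ℓ) := hf.comp_affineMap ℓ
  have hderiv : HasDerivAt (f ∘ ℓ) ⟪∇ f x, y - x⟫ 0 := by
    rw [inner_gradient_left]
    exact hfx.hasFDerivAt.comp_hasDerivAt_of_eq 0 AffineMap.hasDerivAt_lineMap (by simp [ℓ])
  have h0 : ℓ 0 = x := AffineMap.lineMap_apply_zero x y
  have h1 : ℓ 1 = y := AffineMap.lineMap_apply_one x y
  have := hline.le_slope_of_hasDerivAt (by simpa [h0]) (by simpa [h1]) zero_lt_one hderiv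
  rw [slope_def_field, Function.comp_apply, Function.comp_apply, h0, h1] at this
  linarith

theorem hasGradientAt_mul_norm_sq (c : ℝ) (x : E) :
    HasGradientAt (fun z : E => c * ‖z‖ ^ 2) ((2 * c) • x) x := by
  rw [hasGradientAt_iff_hasFDerivAt]
  refine ((hasStrictFDerivAt_norm_sq x).hasFDerivAt.const_mul c).congr_fderiv ?_
  ext v
  simp only [smul_apply, coe_innerSL_apply, nsmul_eq_mul, Nat.cast_ofNat,
    smul_eq_mul, map_smul, InnerProductSpace.toDual_apply_apply]
  ring

theorem StrongConvexOn.add_inner_gradient_add_sq_le {γ : ℝ} (hf : StrongConvexOn s γ f)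
    (hx : x ∈ s) (hy : y ∈ s) (hfx : DifferentiableAt ℝ f x) :
    f x + ⟪∇ f x, y - x⟫ + γ / 2 * ‖y - x‖ ^ 2 ≤ f y := by
  have hg : HasGradientAt (fun z => f z - γ / 2 * ‖z‖ ^ 2) (∇ f x - γ • x) x := by
    have hq := hasGradientAt_mul_norm_sq (γ / 2) x
    rw [mul_div_cancel₀ γ two_ne_zero, hasGradientAt_iff_hasFDerivAt] at hq
    rw [hasGradientAt_iff_hasFDerivAt, map_sub]
    exact (hasGradientAt_iff_hasFDerivAt.mp hfx.hasGradientAt).sub hq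
  have := (strongConvexOn_iff_convex.mp hf).add_inner_gradient_le_s6 hx hy hg.differentiableAt
  rw [hg.gradient] at this
  rw [norm_sub_sq_real]
  simp only [inner_sub_left, inner_sub_right, real_inner_smul_left, real_inner_self_eq_norm_sq,
    real_inner_comm x y] at this ⊢
  linarith

theorem IsMinOn.inner_gradient_nonneg_s6 (h : IsMinOn f s x) (hs : Convex ℝ s) (hx : x ∈ s)
    (hy : y ∈ s) (hfx : DifferentiableAt ℝ f x) : 0 ≤ ⟪∇ f x, y - x⟫ := by
  rw [inner_gradient_left]
  exact h.localize.hasFDerivWithinAt_nonneg hfx.hasFDerivAt.hasFDerivWithinAt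
    (sub_mem_posTangentConeAt_of_segment_subset (hs.segment_subset hx hy))

theorem isMinOn_of_tendsto_gradient {G : ℕ → E → ℝ} {y : ℕ → E} {a : E} (hs : Convex ℝ s)
    (hsc : IsClosed s) (hf : ConvexOn ℝ s f) (hfa : DifferentiableAt ℝ f a)
    (hmin : ∀ j, IsMinOn (G j) s (y j)) (hys : ∀ j, y j ∈ s)
    (hG : ∀ j, DifferentiableAt ℝ (G j) (y j)) (hy : Tendsto y atTop (𝓝 a))
    (hgrad : Tendsto (fun j => ∇ (G j) (y j)) atTop (𝓝 (∇ f a))) :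
    a ∈ s ∧ IsMinOn f s a := by
  have has : a ∈ s := hsc.mem_of_tendsto hy (Eventually.of_forall hys)
  refine ⟨has, isMinOn_iff.mpr fun z hz => ?_⟩
  have hvi : 0 ≤ ⟪∇ f a, z - a⟫ :=
    ge_of_tendsto' (hgrad.inner (tendsto_const_nhds.sub hy)) fun j =>
      (hmin j).inner_gradient_nonneg_s6 hs (hys j) hz (hG j)
  linarith [hf.add_inner_gradient_le_s6 has hz hfa]

theorem tendsto_gradient_of_tendsto_sub {G : ℕ → E → ℝ} {M : ℝ} {x y : ℕ → E} {a : E}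
    (hfa : ContinuousAt (∇ f) a) (hG : ∀ j u v, ‖∇ (G j) u - ∇ (G j) v‖ ≤ M * ‖u - v‖)
    (hGx : ∀ j, ∇ (G j) (x j) = ∇ f (x j)) (hx : Tendsto x atTop (𝓝 a))
    (hxy : Tendsto (fun j => y j - x j) atTop (𝓝 0)) :
    Tendsto (fun j => ∇ (G j) (y j)) atTop (𝓝 (∇ f a)) := by
  have hdiff : Tendsto (fun j => ∇ (G j) (y j) - ∇ (G j) (x j)) atTop (𝓝 0) :=
    squeeze_zero_norm (fun j => hG j (y j) (x j)) (by simpa using (hxy.norm.const_mul M))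
  simpa [hGx] using (hfa.tendsto.comp hx).add hdiff

theorem isMinOn_of_mapClusterPt {G : ℕ → E → ℝ} {M : ℝ} {x y : ℕ → E} {a : E}
    (hs : Convex ℝ s) (hsc : IsClosed s) (hf : ConvexOn ℝ s f) (hfa : DifferentiableAt ℝ f a)
    (hfa' : ContinuousAt (∇ f) a) (hG : ∀ j, DifferentiableAt ℝ (G j) (y j))
    (hGlip : ∀ j u v, ‖∇ (G j) u - ∇ (G j) v‖ ≤ M * ‖u - v‖)
    (hGx : ∀ j, ∇ (G j) (x j) = ∇ f (x j)) (hmin : ∀ j, IsMinOn (G j) s (y j))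
    (hys : ∀ j, y j ∈ s) (hxy : Tendsto (fun j => y j - x j) atTop (𝓝 0))
    (ha : MapClusterPt a atTop x) : a ∈ s ∧ IsMinOn f s a := by
  obtain ⟨φ, hφ, hxφ⟩ := ha.tendsto_subseq
  have hxyφ := hxy.comp hφ.tendsto_atTop
  exact isMinOn_of_tendsto_gradient hs hsc hf hfa (fun j => hmin (φ j)) (fun j => hys (φ j))
    (fun j => hG (φ j)) (by simpa using hxφ.add hxyφ)
    (tendsto_gradient_of_tendsto_sub hfa' (fun j => hGlip (φ j)) (fun j => hGx (φ j)) hxφ hxyφ)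

theorem armijo_sufficient_decrease {F : E → ℝ} {γ η αmin α : ℝ} {x x' : E} (hγ : 0 ≤ γ)
    (hη : 0 < η) (hαmin : 0 ≤ αmin) (hα : αmin ≤ α) (hf : StrongConvexOn s γ f) (hx : x ∈ s)
    (hx' : x' ∈ s) (hfx : DifferentiableAt ℝ f x) (hgrad : ∇ f x = ∇ F x) (hdec : f x' ≤ f x)
    (harmijo : F (x + α • (x' - x)) ≤ F x + η * α * ⟪∇ F x, x' - x⟫) :
    F (x + α • (x' - x)) ≤ F x - η * αmin * (γ / 2) * ‖x' - x‖ ^ 2 := by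
  have hdir : ⟪∇ F x, x' - x⟫ ≤ -(γ / 2 * ‖x' - x‖ ^ 2) := by
    have := hf.add_inner_gradient_add_sq_le hx hx' hfx
    rw [hgrad] at this
    linarith
  have hηα : 0 ≤ η * α := mul_nonneg hη.le (hαmin.trans hα)
  calc F (x + α • (x' - x)) ≤ F x + η * α * ⟪∇ F x, x' - x⟫ := harmijo
    _ ≤ F x - η * α * (γ / 2 * ‖x' - x‖ ^ 2) := by nlinarith [mul_le_mul_of_nonneg_left hdir hηα]
    _ ≤ F x - η * αmin * (γ / 2) * ‖x' - x‖ ^ 2 := by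
      have : 0 ≤ η * (γ / 2 * ‖x' - x‖ ^ 2) := by positivity
      nlinarith [mul_le_mul_of_nonneg_right hα this]

end InnerProductSpace

theorem isCompact_setOf_le_of_tendsto_cocompact {X α : Type*} [TopologicalSpace X]
    [TopologicalSpace α] [LinearOrder α] [ClosedIicTopology α] [NoMaxOrder α] {f : X → α}
    (hf : Continuous f) (hlim : Tendsto f (cocompact X) atTop) (c : α) :
    IsCompact {z | f z ≤ c} := by
  obtain ⟨t, ht, hsub⟩ := mem_cocompact.mp (hlim.eventually (eventually_gt_atTop c))
  refine ht.of_isClosed_subset (isClosed_Iic.preimage hf) fun z hz => ?_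
  by_contra hzt
  exact (hsub hzt).not_ge hz

theorem StrictConvexOn.exists_isMinOn_tendsto_of_mapClusterPt {E ι : Type*} [TopologicalSpace E]
    [AddCommGroup E] [Module ℝ E] {s K : Set E} {f : E → ℝ} {l : Filter ι} [l.NeBot]
    {x : ι → E} (hf : StrictConvexOn ℝ s f) (hK : IsCompact K) (hxK : ∀ i, x i ∈ K)
    (hclust : ∀ a, MapClusterPt a l x → a ∈ s ∧ IsMinOn f s a) :
    ∃ a ∈ s, IsMinOn f s a ∧ (∀ z ∈ s, IsMinOn f s z → z = a) ∧ Tendsto x l (𝓝 a) := by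
  obtain ⟨a, -, ha⟩ :=
    hK.exists_mapClusterPt (f := l) (tendsto_principal.mpr (Eventually.of_forall hxK))
  obtain ⟨has, hamin⟩ := hclust a ha
  have huniq (z) (hz : z ∈ s) (hzmin : IsMinOn f s z) : z = a :=
    hf.eq_of_isMinOn hzmin hamin hz has
  refine ⟨a, has, hamin, huniq, hK.tendsto_nhds_of_unique_mapClusterPt
    (Eventually.of_forall hxK) fun b _ hb => ?_⟩
  exact huniq b (hclust b hb).1 (hclust b hb).2

theorem tendsto_zero_of_le_sub_mul {a b : ℕ → ℝ} {c : ℝ} (hc : 0 < c)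
    (hbdd : BddBelow (range a)) (hb : ∀ k, 0 ≤ b k) (hdec : ∀ k, a (k + 1) ≤ a k - c * b k) :
    Tendsto b atTop (𝓝 0) := by
  have hanti : Antitone a :=
    antitone_nat_of_succ_le fun k => (hdec k).trans (sub_le_self _ (mul_nonneg hc.le (hb k)))
  have hlim := tendsto_atTop_ciInf hanti hbdd
  have hdiff : Tendsto (fun k => (a k - a (k + 1)) / c) atTop (𝓝 0) := by
    simpa using (hlim.sub (hlim.comp (tendsto_add_atTop_nat 1))).div_const c
  refine squeeze_zero hb (fun k => ?_) hdiff
  rw [le_div_iff₀ hc]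
  linarith [hdec k]

theorem stmt_6_general {n : ℕ}
    (S : Set (EuclideanSpace ℝ (Fin n)))
    (hScl : IsClosed S) (hSconv : Convex ℝ S)
    (F : EuclideanSpace ℝ (Fin n) → ℝ)
    (hFdiff : Differentiable ℝ F)
    (L : ℝ)
    (hFLip : ∀ u v, ‖gradient F u - gradient F v‖ ≤ L * ‖u - v‖)
    (hFcoer : Filter.Tendsto F (Filter.comap norm Filter.atTop) Filter.atTop)
    (γ η alphaBar M : ℝ) (hγ : 0 < γ) (hη : η ∈ Set.Ioo (0 : ℝ) 1)
    (halphaBar : 0 < alphaBar)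
    (Fk : ℕ → EuclideanSpace ℝ (Fin n) → ℝ)
    (x xb xh : ℕ → EuclideanSpace ℝ (Fin n))
    (ε α : ℕ → ℝ)
    (hFkdiff : ∀ k, Differentiable ℝ (Fk k))
    (hFksc : ∀ k, ConvexOn ℝ Set.univ (fun z => Fk k z - γ / 2 * ‖z‖ ^ 2))
    (hFkLip : ∀ k u v, ‖gradient (Fk k) u - gradient (Fk k) v‖ ≤ M * ‖u - v‖)
    (hgradeq : ∀ k, gradient (Fk k) (x k) = gradient F (x k))
    (hxbS : ∀ k, xb k ∈ S)
    (hxbmin : ∀ k, ∀ z ∈ S, Fk k (xb k) ≤ Fk k z)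
    (hxherr : ∀ k, ‖xh k - xb k‖ ≤ ε k)
    (hxhdec : ∀ k, Fk k (xh k) ≤ Fk k (x k))
    (hεlim : Filter.Tendsto ε Filter.atTop (nhds 0))
    (hα : ∀ k, α k ∈ Set.Icc alphaBar 1)
    (harmijo : ∀ k, F (x k + α k • (xh k - x k)) ≤
      F (x k) + η * α k * (inner ℝ (gradient F (x k)) (xh k - x k) : ℝ))
    (hupd : ∀ k, x (k + 1) = x k + α k • (xh k - x k))
    (hFstrict : StrictConvexOn ℝ Set.univ F) :
    ∃ xstar : EuclideanSpace ℝ (Fin n), xstar ∈ S ∧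
      (∀ z ∈ S, F xstar ≤ F z) ∧
      (∀ z ∈ S, (∀ w ∈ S, F z ≤ F w) → z = xstar) ∧
      Filter.Tendsto x Filter.atTop (nhds xstar) := by
  set K := {z | F z ≤ F (x 0)}
  have hK : IsCompact K := isCompact_setOf_le_of_tendsto_cocompact hFdiff.continuous
    (hFcoer.mono_left tendsto_norm_cocompact_atTop.le_comap) _
  have hc : 0 < η * alphaBar * (γ / 2) := by have := hη.1; positivity
  have hdesc (k : ℕ) : F (x (k + 1)) ≤ F (x k) - η * alphaBar * (γ / 2) * ‖xh k - x k‖ ^ 2 := by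
    rw [hupd k]
    exact armijo_sufficient_decrease hγ.le hη.1 halphaBar.le (hα k).1
      (strongConvexOn_iff_convex.mpr (hFksc k)) (mem_univ _) (mem_univ _) (hFkdiff k _)
      (hgradeq k) (hxhdec k) (harmijo k)
  have hxK (k : ℕ) : x k ∈ K := antitone_nat_of_succ_le (f := F ∘ x)
    (fun k => (hdesc k).trans (sub_le_self _ (by positivity))) (Nat.zero_le k)
  have hstep : Tendsto (fun k => ‖xh k - x k‖) atTop (𝓝 0) := by
    have hbdd := (hK.bddBelow_image hFdiff.continuous.continuousOn).mono
      (range_subset_iff.mpr fun k => mem_image_of_mem F (hxK k))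
    simpa using (tendsto_zero_of_le_sub_mul hc hbdd (fun k => sq_nonneg _) hdesc).sqrt
  have hgap : Tendsto (fun k => xb k - x k) atTop (𝓝 0) := by
    simpa using (squeeze_zero_norm hxherr hεlim).neg.add
      (tendsto_zero_iff_norm_tendsto_zero.mpr hstep)
  have hgc : Continuous (∇ F) :=
    (LipschitzWith.of_dist_le' fun u v => by simpa only [dist_eq_norm] using hFLip u v).continuous
  obtain ⟨a, haS, hamin, huniq, hlim⟩ :=
    (hFstrict.subset (subset_univ S) hSconv).exists_isMinOn_tendsto_of_mapClusterPt hK hxK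
      fun a => isMinOn_of_mapClusterPt hSconv hScl (hFstrict.convexOn.subset (subset_univ S) hSconv)
        (hFdiff a) hgc.continuousAt (fun k => hFkdiff k _) hFkLip hgradeq
        (fun k => isMinOn_iff.mpr (hxbmin k)) hxbS hgap
  exact ⟨a, haS, isMinOn_iff.mp hamin, fun z hz hzmin => huniq z hz (isMinOn_iff.mpr hzmin), hlim⟩

theorem stmt_6 {n : ℕ}
    (S : Set (EuclideanSpace ℝ (Fin n)))
    (hSne : S.Nonempty) (hScl : IsClosed S) (hSconv : Convex ℝ S)
    (F : EuclideanSpace ℝ (Fin n) → ℝ)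
    (hFconv : ConvexOn ℝ Set.univ F)
    (hFdiff : Differentiable ℝ F)
    (L : ℝ) (hL : 0 < L)
    (hFLip : ∀ u v, ‖gradient F u - gradient F v‖ ≤ L * ‖u - v‖)
    (hFcoer : Filter.Tendsto F (Filter.comap norm Filter.atTop) Filter.atTop)
    (γ η alphaBar M : ℝ) (hγ : 0 < γ) (hη : η ∈ Set.Ioo (0 : ℝ) 1)
    (halphaBar : 0 < alphaBar) (hM : 0 < M)
    (Fk : ℕ → EuclideanSpace ℝ (Fin n) → ℝ)
    (x xb xh : ℕ → EuclideanSpace ℝ (Fin n))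
    (ε α : ℕ → ℝ)
    (hFkdiff : ∀ k, Differentiable ℝ (Fk k))
    (hFksc : ∀ k, ConvexOn ℝ Set.univ (fun z => Fk k z - γ / 2 * ‖z‖ ^ 2))
    (hFkLip : ∀ k u v, ‖gradient (Fk k) u - gradient (Fk k) v‖ ≤ M * ‖u - v‖)
    (hgradeq : ∀ k, gradient (Fk k) (x k) = gradient F (x k))
    (hxbS : ∀ k, xb k ∈ S)
    (hxbmin : ∀ k, ∀ z ∈ S, Fk k (xb k) ≤ Fk k z)
    (hxhS : ∀ k, xh k ∈ S)
    (hxherr : ∀ k, ‖xh k - xb k‖ ≤ ε k)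
    (hxhdec : ∀ k, Fk k (xh k) ≤ Fk k (x k))
    (hε : ∀ k, 0 < ε k)
    (hεlim : Filter.Tendsto ε Filter.atTop (nhds 0))
    (hα : ∀ k, α k ∈ Set.Icc alphaBar 1)
    (harmijo : ∀ k, F (x k + α k • (xh k - x k)) ≤
      F (x k) + η * α k * (inner ℝ (gradient F (x k)) (xh k - x k) : ℝ))
    (hupd : ∀ k, x (k + 1) = x k + α k • (xh k - x k))
    (hx0 : x 0 ∈ S)
    (hFstrict : StrictConvexOn ℝ Set.univ F) :
    ∃ xstar : EuclideanSpace ℝ (Fin n), xstar ∈ S ∧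
      (∀ z ∈ S, F xstar ≤ F z) ∧
      (∀ z ∈ S, (∀ w ∈ S, F z ≤ F w) → z = xstar) ∧
      Filter.Tendsto x Filter.atTop (nhds xstar) :=
  stmt_6_general S hScl hSconv F hFdiff L hFLip hFcoer γ η alphaBar M hγ hη halphaBar Fk x xb xh ε α
    hFkdiff hFksc hFkLip hgradeq hxbS hxbmin hxherr hxhdec hεlim hα harmijo hupd hFstrict
end

section
/- Let S ⊆ ℝⁿ be nonempty, closed and convex, γ > 0, θ ∈ (0,1), and x⁽⁰⁾ ∈ S. For each k ∈ ℕ let F_k : ℝⁿ → ℝ be differentiable and γ-strongly convex, let x̄⁽ᵏ⁾ ∈ S be the minimizer of F_k over S, and let x̂⁽ᵏ⁾ ∈ S satisfy ‖∇_S F_k(x̂⁽ᵏ⁾)‖ ≤ θᵏ ‖∇_S F_k(x⁽⁰⁾)‖. Then ‖x̂⁽ᵏ⁾ − x̄⁽ᵏ⁾‖ ≤ ε_k := θᵏ (2/γ) ‖∇_S F_k(x⁽⁰⁾)‖ for all k; in particular, if sup_k ‖∇_S F_k(x⁽⁰⁾)‖ < ∞, then ε_k > 0 can occur with ε_k → 0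 and hence ‖x̂⁽ᵏ⁾ − x̄⁽ᵏ⁾‖ → 0. -/
/-- The tangent cone to `S` at `x`: the closure of `{t • (z - x) : t ≥ 0, z ∈ S}`. -/
def tangentConeTo {n : ℕ} (S : Set (EuclideanSpace ℝ (Fin n)))
    (x : EuclideanSpace ℝ (Fin n)) : Set (EuclideanSpace ℝ (Fin n)) :=
  closure {v | ∃ t : ℝ, 0 ≤ t ∧ ∃ z ∈ S, v = t • (z - x)}

/-- `v` is the projected gradient of `g` at `x` w.r.t. `S`: `v` is the point of the
tangent cone `T_S(x)` nearest to `-∇g(x)`. -/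
def IsProjGrad {n : ℕ} (S : Set (EuclideanSpace ℝ (Fin n)))
    (g : EuclideanSpace ℝ (Fin n) → ℝ) (x v : EuclideanSpace ℝ (Fin n)) : Prop :=
  v ∈ tangentConeTo S x ∧
    ∀ w ∈ tangentConeTo S x, ‖-gradient g x - v‖ ≤ ‖-gradient g x - w‖

/-!
Strong convexity gives `F b ≥ F x + ⟪∇F x, b - x⟫ + (γ/2)‖b - x‖²`, so for any `b ∈ S` with
`F b ≤ F x` we get `(γ/2)‖b - x‖² ≤ ⟪-∇F x, b - x⟫`. Since `b - x` lies in the tangent cone and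
the projected gradient `v` is the projection of `-∇F x` onto that cone, `⟪-∇F x - v, b - x⟫ ≤ 0`,
whence `(γ/2)‖b - x‖² ≤ ⟪v, b - x⟫ ≤ ‖v‖‖b - x‖`, i.e. `‖x - b‖ ≤ (2/γ)‖v‖`. Applied to the
minimizer and the stopping rule this is the bound `ε_k`, which tends to zero with `θ ^ k`.
-/

open Set Filter
open scoped RealInnerProductSpace Pointwise

lemma ConvexOn.fderiv_sub_le {E : Type*} [NormedAddCommGroup E] [NormedSpace ℝ E]
    {g : E → ℝ} (hc : ConvexOn ℝ univ g) {x : E} (hd : DifferentiableAt ℝ g x) (y : E) :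
    fderiv ℝ g x (y - x) ≤ g y - g x := by
  set ℓ : ℝ →ᵃ[ℝ] E := AffineMap.lineMap x y
  have hline : HasDerivAt (g ∘ ℓ) (fderiv ℝ g x (y - x)) 0 := by
    simpa using hd.hasFDerivAt.comp_hasDerivAt_of_eq (0 : ℝ) AffineMap.hasDerivAt_lineMap
      (AffineMap.lineMap_apply_zero x y).symm
  have := (hc.comp_affineMap ℓ).le_slope_of_hasDerivAt
    (mem_univ 0) (mem_univ 1) one_pos hline
  simpa [ℓ, slope_def_field] using this

section StrongConvex

variable {E : Type*} [NormedAddCommGroup E] [InnerProductSpace ℝ E] [CompleteSpace E]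

lemma StrongConvexOn.inner_gradient_add_le {f : E → ℝ} {m : ℝ} (hf : StrongConvexOn univ m f)
    {x : E} (hd : DifferentiableAt ℝ f x) (y : E) :
    ⟪gradient f x, y - x⟫ + m / 2 * ‖y - x‖ ^ 2 ≤ f y - f x := by
  have hsq : HasFDerivAt (fun z : E => m / 2 * ‖z‖ ^ 2) ((m / 2) • (2 • innerSL ℝ x)) x :=
    (hasStrictFDerivAt_norm_sq x).hasFDerivAt.const_mul (m / 2)
  have hG : HasFDerivAt (fun z => f z - m / 2 * ‖z‖ ^ 2)
      (fderiv ℝ f x - (m / 2) • 2 • innerSL ℝ x) x :=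
    hd.hasFDerivAt.sub hsq
  have hgrad : fderiv ℝ f x (y - x) = ⟪gradient f x, y - x⟫ := by
    rw [hd.hasGradientAt.hasFDerivAt.fderiv, InnerProductSpace.toDual_apply_apply]
  have h := (strongConvexOn_iff_convex.1 hf).fderiv_sub_le hG.differentiableAt y
  rw [hG.fderiv] at h
  simp only [sub_apply, smul_apply, innerSL_apply_apply, hgrad, inner_sub_right,
    real_inner_self_eq_norm_sq, smul_eq_mul, nsmul_eq_mul, Nat.cast_ofNat] at h
  rw [norm_sub_sq_real, inner_sub_right, real_inner_comm x y]
  linarith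

end StrongConvex

section TangentCone

variable {n : ℕ} {S : Set (EuclideanSpace ℝ (Fin n))} {x : EuclideanSpace ℝ (Fin n)}

lemma sub_mem_tangentConeTo {z : EuclideanSpace ℝ (Fin n)} (hz : z ∈ S) :
    z - x ∈ tangentConeTo S x :=
  subset_closure ⟨1, zero_le_one, z, hz, (one_smul ℝ _).symm⟩

lemma smul_mem_tangentConeTo {c : ℝ} (hc : 0 ≤ c) {v : EuclideanSpace ℝ (Fin n)}
    (hv : v ∈ tangentConeTo S x) : c • v ∈ tangentConeTo S x := by
  refine map_mem_closure (continuous_const_smul c) hv ?_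
  rintro _ ⟨t, ht, z, hz, rfl⟩
  exact ⟨c * t, mul_nonneg hc ht, z, hz, smul_smul c t _⟩

lemma convex_tangentConeTo (hS : Convex ℝ S) (x : EuclideanSpace ℝ (Fin n)) :
    Convex ℝ (tangentConeTo S x) := by
  refine Convex.closure ?_
  rintro _ ⟨s, hs, y, hy, rfl⟩ _ ⟨t, ht, z, hz, rfl⟩ a b ha hb -
  have hS' : Convex ℝ ((fun w => -x + w) '' S) := hS.translate (-x)
  obtain ⟨_, ⟨w, hw, rfl⟩, hsum⟩ : (a * s) • (-x + y) + (b * t) • (-x + z) ∈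
      (a * s + b * t) • ((fun w => -x + w) '' S) := by
    rw [hS'.add_smul (by positivity) (by positivity)]
    exact Set.add_mem_add (Set.smul_mem_smul_set (mem_image_of_mem _ hy))
      (Set.smul_mem_smul_set (mem_image_of_mem _ hz))
  refine ⟨a * s + b * t, by positivity, w, hw, ?_⟩
  simp only [smul_smul, neg_add_eq_sub] at hsum ⊢
  exact hsum.symm

end TangentCone

section ProjGrad

variable {n : ℕ} {S : Set (EuclideanSpace ℝ (Fin n))} {x v : EuclideanSpace ℝ (Fin n)}

lemma IsProjGrad.inner_le_zero {g : EuclideanSpace ℝ (Fin n) → ℝ} (hS : Convex ℝ S)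
    (h : IsProjGrad S g x v) {w : EuclideanSpace ℝ (Fin n)} (hw : w ∈ tangentConeTo S x) :
    ⟪-gradient g x - v, w⟫ ≤ 0 := by
  obtain ⟨hv, hmin⟩ := h
  have hvar : ∀ w ∈ tangentConeTo S x, ⟪-gradient g x - v, w - v⟫ ≤ 0 := by
    have : Nonempty (tangentConeTo S x) := ⟨⟨v, hv⟩⟩
    refine (norm_eq_iInf_iff_real_inner_le_zero (convex_tangentConeTo hS x) hv).1 ?_
    have hbdd : BddBelow (range fun w : tangentConeTo S x =>
        ‖-gradient g x - (w : EuclideanSpace ℝ (Fin n))‖) :=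
      ⟨0, forall_mem_range.2 fun _ => norm_nonneg _⟩
    exact le_antisymm (le_ciInf fun w => hmin w.1 w.2) (ciInf_le hbdd ⟨v, hv⟩)
  have hv2 := hvar _ (smul_mem_tangentConeTo zero_le_two hv)
  have hvw := hvar w hw
  rw [two_smul, add_sub_cancel_right] at hv2
  rw [inner_sub_right] at hvw
  linarith

lemma IsProjGrad.norm_sub_le {F : EuclideanSpace ℝ (Fin n) → ℝ} {γ : ℝ} (hS : Convex ℝ S)
    (hγ : 0 < γ) (hF : StrongConvexOn univ γ F) (hd : DifferentiableAt ℝ F x)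
    {b : EuclideanSpace ℝ (Fin n)} (hb : b ∈ S) (hFb : F b ≤ F x) (hv : IsProjGrad S F x v) :
    ‖x - b‖ ≤ 2 / γ * ‖v‖ := by
  have hgrowth := hF.inner_gradient_add_le hd b
  have hproj := hv.inner_le_zero hS (sub_mem_tangentConeTo hb)
  have hcs := real_inner_le_norm v (b - x)
  rw [inner_sub_left, inner_neg_left] at hproj
  have key : γ / 2 * ‖b - x‖ * ‖b - x‖ ≤ ‖v‖ * ‖b - x‖ := by nlinarith
  rw [norm_sub_rev] at key
  rcases (norm_nonneg (x - b)).eq_or_lt with hzero | hpos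
  · rw [← hzero]
    positivity
  · have := le_of_mul_le_mul_right key hpos
    rw [div_mul_eq_mul_div, le_div_iff₀ hγ]
    linarith

end ProjGrad

theorem stmt_8_general {n : ℕ}
    (S : Set (EuclideanSpace ℝ (Fin n)))
    (hSconv : Convex ℝ S)
    (γ θ : ℝ) (hγ : 0 < γ) (hθ : θ ∈ Set.Ioo (0 : ℝ) 1)
    (Fk : ℕ → EuclideanSpace ℝ (Fin n) → ℝ)
    (hFkdiff : ∀ k, Differentiable ℝ (Fk k))
    (hFksc : ∀ k, ConvexOn ℝ Set.univ (fun z => Fk k z - γ / 2 * ‖z‖ ^ 2))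
    (xb xh : ℕ → EuclideanSpace ℝ (Fin n))
    (hxbS : ∀ k, xb k ∈ S)
    (hxbmin : ∀ k, ∀ z ∈ S, Fk k (xb k) ≤ Fk k z)
    (hxhS : ∀ k, xh k ∈ S)
    (pgh pg0 : ℕ → EuclideanSpace ℝ (Fin n))
    (hpgh : ∀ k, IsProjGrad S (Fk k) (xh k) (pgh k))
    (hstop : ∀ k, ‖pgh k‖ ≤ θ ^ k * ‖pg0 k‖) :
    (∀ k, ‖xh k - xb k‖ ≤ θ ^ k * (2 / γ) * ‖pg0 k‖) ∧
    ((∃ B : ℝ, ∀ k, ‖pg0 k‖ ≤ B) →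
      Filter.Tendsto (fun k => θ ^ k * (2 / γ) * ‖pg0 k‖) Filter.atTop (nhds 0) ∧
      Filter.Tendsto (fun k => ‖xh k - xb k‖) Filter.atTop (nhds 0)) := by
  obtain ⟨hθ0, hθ1⟩ := hθ
  have hbound (k : ℕ) : ‖xh k - xb k‖ ≤ θ ^ k * (2 / γ) * ‖pg0 k‖ :=
    calc ‖xh k - xb k‖ ≤ 2 / γ * ‖pgh k‖ :=
          (hpgh k).norm_sub_le hSconv hγ (strongConvexOn_iff_convex.2 (hFksc k))
            (hFkdiff k _) (hxbS k) (hxbmin k _ (hxhS k))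
      _ ≤ 2 / γ * (θ ^ k * ‖pg0 k‖) := by gcongr; exact hstop k
      _ = θ ^ k * (2 / γ) * ‖pg0 k‖ := by ring
  refine ⟨hbound, fun ⟨B, hB⟩ => ?_⟩
  have hε : Tendsto (fun k => θ ^ k * (2 / γ) * ‖pg0 k‖) atTop (nhds 0) := by
    refine Tendsto.zero_mul_isBoundedUnder_le ?_ (isBoundedUnder_of ⟨B, fun k => ?_⟩)
    · simpa using (tendsto_pow_atTop_nhds_zero_of_lt_one hθ0.le hθ1).mul_const (2 / γ)
    · simpa using hB k
  exact ⟨hε, squeeze_zero (fun k => norm_nonneg _) hbound hε⟩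

theorem stmt_8 {n : ℕ}
    (S : Set (EuclideanSpace ℝ (Fin n)))
    (hSne : S.Nonempty) (hScl : IsClosed S) (hSconv : Convex ℝ S)
    (γ θ : ℝ) (hγ : 0 < γ) (hθ : θ ∈ Set.Ioo (0 : ℝ) 1)
    (x0 : EuclideanSpace ℝ (Fin n)) (hx0 : x0 ∈ S)
    (Fk : ℕ → EuclideanSpace ℝ (Fin n) → ℝ)
    (hFkdiff : ∀ k, Differentiable ℝ (Fk k))
    (hFksc : ∀ k, ConvexOn ℝ Set.univ (fun z => Fk k z - γ / 2 * ‖z‖ ^ 2))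
    (xb xh : ℕ → EuclideanSpace ℝ (Fin n))
    (hxbS : ∀ k, xb k ∈ S)
    (hxbmin : ∀ k, ∀ z ∈ S, Fk k (xb k) ≤ Fk k z)
    (hxhS : ∀ k, xh k ∈ S)
    (pgh pg0 : ℕ → EuclideanSpace ℝ (Fin n))
    (hpgh : ∀ k, IsProjGrad S (Fk k) (xh k) (pgh k))
    (hpg0 : ∀ k, IsProjGrad S (Fk k) x0 (pg0 k))
    (hstop : ∀ k, ‖pgh k‖ ≤ θ ^ k * ‖pg0 k‖) :
    (∀ k, ‖xh k - xb k‖ ≤ θ ^ k * (2 / γ) * ‖pg0 k‖) ∧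
    ((∃ B : ℝ, ∀ k, ‖pg0 k‖ ≤ B) →
      Filter.Tendsto (fun k => θ ^ k * (2 / γ) * ‖pg0 k‖) Filter.atTop (nhds 0) ∧
      Filter.Tendsto (fun k => ‖xh k - xb k‖) Filter.atTop (nhds 0)) :=
  stmt_8_general S hSconv γ θ hγ hθ Fk hFkdiff hFksc xb xh hxbS hxbmin hxhS pgh pg0 hpgh hstop
end

section
/- If y_j > 0 for all j and the linear map x ↦ Ax is injective, then the generalized Kullback–Leibler divergence D_KL is strictly convex on the nonnegative orthant Ω = {x ∈ ℝⁿ : x ≥ 0}. -/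
/-!
Each summand is `t ↦ y log (y / t) + t - y` evaluated at `t = (Ax + b)_j`; for `y > 0` this is
`-y log t` plus an affine function, hence strictly convex on `t > 0`. A sum of strictly convex
functions of separate coordinates is strictly convex on the product set, and precomposing with
the affine map `x ↦ Ax + b`, which is injective and sends `Ω` into the open positive orthant,
preserves strict convexity.
-/

open Real Set Matrix

theorem StrictConvexOn.comp_affineMap {𝕜 E F β : Type*} [Field 𝕜] [LinearOrder 𝕜]
    [AddCommGroup E] [AddCommGroup F] [Module 𝕜 E] [Module 𝕜 F]
    [AddCommMonoid β] [PartialOrder β] [SMul 𝕜 β]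
    {f : F → β} {t : Set F} (hf : StrictConvexOn 𝕜 t f)
    {g : E →ᵃ[𝕜] F} {s : Set E} (hs : Convex 𝕜 s) (hst : MapsTo g s t) (hg : InjOn g s) :
    StrictConvexOn 𝕜 s (f ∘ g) :=
  ⟨hs, fun x hx y hy hxy a b ha hb hab => by
    simpa only [Function.comp_apply, Convex.combo_affine_apply hab] using
      hf.2 (hst hx) (hst hy) (hg.ne hx hy hxy) ha hb hab⟩

theorem StrictConvexOn.sum_pi {𝕜 ι β : Type*} {E : ι → Type*} [Field 𝕜] [LinearOrder 𝕜]
    [∀ j, AddCommGroup (E j)] [∀ j, Module 𝕜 (E j)]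
    [AddCommMonoid β] [PartialOrder β] [IsOrderedCancelAddMonoid β] [Module 𝕜 β] [Fintype ι]
    {t : ∀ j, Set (E j)} {g : ∀ j, E j → β} (hg : ∀ j, StrictConvexOn 𝕜 (t j) (g j)) :
    StrictConvexOn 𝕜 (univ.pi t) fun u => ∑ j, g j (u j) := by
  refine ⟨convex_pi fun j _ => (hg j).1, fun u hu v hv huv a b ha hb hab => ?_⟩
  obtain ⟨j₀, hj₀⟩ := Function.ne_iff.mp huv
  simp only [Finset.smul_sum, ← Finset.sum_add_distrib]
  exact Finset.sum_lt_sum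
    (fun j _ => (hg j).convexOn.2 (hu j trivial) (hv j trivial) ha.le hb.le hab)
    ⟨j₀, Finset.mem_univ _, (hg j₀).2 (hu j₀ trivial) (hv j₀ trivial) hj₀ ha hb hab⟩

theorem strictConvexOn_mul_log_div_add_sub {y : ℝ} (hy : 0 < y) :
    StrictConvexOn ℝ (Ioi 0) fun t => y * log (y / t) + t - y := by
  refine ⟨convex_Ioi 0, fun p hp q hq hpq a b ha hb hab => ?_⟩
  have hlog := strictConcaveOn_log_Ioi.2 hp hq hpq ha hb hab
  have hpb : 0 < a * p + b * q := convex_Ioi 0 hp hq ha.le hb.le hab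
  simp only [smul_eq_mul] at hlog ⊢
  rw [log_div hy.ne' hpb.ne', log_div hy.ne' (mem_Ioi.1 hp).ne',
    log_div hy.ne' (mem_Ioi.1 hq).ne']
  linear_combination y * hlog + (y - y * log y) * hab

theorem stmt_14_general {m n : ℕ}
    (A : Matrix (Fin m) (Fin n) ℝ) (hA : ∀ i j, 0 ≤ A i j)
    (b : Fin m → ℝ) (hb : ∀ j, 0 < b j)
    (y : Fin m → ℝ) (hy : ∀ j, 0 < y j)
    (hinj : Function.Injective (A.mulVec : (Fin n → ℝ) → (Fin m → ℝ))) :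
    StrictConvexOn ℝ {x : EuclideanSpace ℝ (Fin n) | ∀ i, 0 ≤ x i}
      (fun x => ∑ j, (y j * Real.log (y j / ((∑ i, A j i * x i) + b j)) +
        ((∑ i, A j i * x i) + b j) - y j)) := by
  let g : EuclideanSpace ℝ (Fin n) →ᵃ[ℝ] (Fin m → ℝ) :=
    { toFun x := A *ᵥ x.ofLp + b
      linear := A.toLin'.comp (WithLp.linearEquiv 2 ℝ (Fin n → ℝ)).toLinearMap
      map_vadd' x v := by simp [mulVec_add, add_assoc] }
  have hconvex : Convex ℝ {x : EuclideanSpace ℝ (Fin n) | ∀ i, 0 ≤ x i} :=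
    fun x hx z hz a c ha hc _ i => add_nonneg (mul_nonneg ha (hx i)) (mul_nonneg hc (hz i))
  have hpos : MapsTo g {x | ∀ i, 0 ≤ x i} (univ.pi fun _ => Ioi 0) := fun x hx j _ =>
    show 0 < (∑ i, A j i * x i) + b j from
      add_pos_of_nonneg_of_pos (Finset.sum_nonneg fun i _ => mul_nonneg (hA j i) (hx i)) (hb j)
  have hginj : InjOn g {x | ∀ i, 0 ≤ x i} := fun x _ z _ hxz =>
    WithLp.ofLp_injective 2 (hinj (add_left_injective b hxz))
  have hkl : StrictConvexOn ℝ {x | ∀ i, 0 ≤ x i}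
      ((fun u => ∑ j, (y j * log (y j / u j) + u j - y j)) ∘ g) :=
    (StrictConvexOn.sum_pi fun j => strictConvexOn_mul_log_div_add_sub (hy j)).comp_affineMap
      hconvex hpos hginj
  exact hkl

theorem stmt_14 {m n : ℕ} (hm : 0 < m) (hn : 0 < n)
    (A : Matrix (Fin m) (Fin n) ℝ) (hA : ∀ i j, 0 ≤ A i j)
    (hAcol : ∀ j, ∑ i, A i j = 1)
    (b : Fin m → ℝ) (hb : ∀ j, 0 < b j)
    (y : Fin m → ℝ) (hy : ∀ j, 0 < y j)
    (hinj : Function.Injective (A.mulVec : (Fin n → ℝ) → (Fin m → ℝ))) :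
    StrictConvexOn ℝ {x : EuclideanSpace ℝ (Fin n) | ∀ i, 0 ≤ x i}
      (fun x => ∑ j, (y j * Real.log (y j / ((∑ i, A j i * x i) + b j)) +
        ((∑ i, A j i * x i) + b j) - y j)) :=
  stmt_14_general A hA b hb y hy hinj
end

section
/- Suppose y_j > 0 for all j and the linear map x ↦ Ax is injective. Then for every bounded convex set S contained in the nonnegative orthant Ω = {x ∈ ℝⁿ : x ≥ 0}, there exists m₀ > 0 such that D_KL is m₀-strongly convex on S, i.e., D_KL − (m₀/2)‖·‖² is convex on S. -/
/-!
On a bounded subset of the orthant every coordinate `t = (Ax + b)_j` lies in an interval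
`(0, M]`, where `t ↦ y log (y / t) + t - y` has second derivative `y / t² ≥ y / M²`. Hence
`D_KL` is the composition of a coordinatewise strongly convex function with the affine map
`x ↦ Ax + b`, which is injective and therefore anti-Lipschitz, so strong convexity pulls back
to `x`.
-/

open Real Set Filter Topology

lemma exists_pos_forall_le_of_pos {ι : Type*} [Finite ι] {y : ι → ℝ} (hy : ∀ i, 0 < y i) :
    ∃ c > 0, ∀ i, c ≤ y i :=
  ((eventually_mem_nhdsWithin (s := Ioi 0)).and
    (eventually_all.2 fun i => nhdsWithin_le_nhds (eventually_le_nhds (hy i)))).exists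

lemma strongConvexOn_mul_log_div_add_sub {y : ℝ} (hy : 0 < y) (M : ℝ) :
    StrongConvexOn (Ioc 0 M) (y / M ^ 2) (fun t => y * log (y / t) + t - y) := by
  rw [strongConvexOn_iff_convex]
  have hint : interior (Ioc (0 : ℝ) M) = Ioo 0 M := interior_Ioc
  have h := convexOn_of_hasDerivWithinAt2_nonneg (convex_Ioc 0 M)
    (f := fun t => y * log y - y * log t + t - y - y / M ^ 2 / 2 * t ^ 2)
    (f' := fun t => -y * t⁻¹ + 1 - y / M ^ 2 * t) (f'' := fun t => y * (t ^ 2)⁻¹ - y / M ^ 2)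
    ?_ ?_ ?_ ?_
  · refine h.congr fun t ht => ?_
    simp only [Real.norm_eq_abs, sq_abs, log_div hy.ne' ht.1.ne']
    ring
  · exact ContinuousOn.sub (by fun_prop (disch := exact fun t ht => ht.1.ne')) (by fun_prop)
  all_goals intro t ht; rw [hint] at ht
  · refine HasDerivAt.hasDerivWithinAt ?_
    have hlog := ((hasDerivAt_log ht.1.ne').const_mul y).const_sub (y * log y)
    exact ((hlog.add (hasDerivAt_id' t)).sub_const y |>.sub
      ((hasDerivAt_pow 2 t).const_mul (y / M ^ 2 / 2))).congr_deriv (by ring)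
  · refine HasDerivAt.hasDerivWithinAt ?_
    exact ((((hasDerivAt_inv ht.1.ne').const_mul (-y)).add_const 1).sub
      ((hasDerivAt_id' t).const_mul (y / M ^ 2))).congr_deriv (by ring)
  · have : (M ^ 2)⁻¹ ≤ (t ^ 2)⁻¹ :=
      inv_anti₀ (pow_pos ht.1 2) (pow_le_pow_left₀ ht.1.le ht.2.le 2)
    simp only [sub_nonneg, div_eq_mul_inv]
    gcongr

lemma strongConvexOn_sum_apply {ι : Type*} [Fintype ι] {T : Set ℝ} {μ : ℝ} {g : ι → ℝ → ℝ}
    (hg : ∀ j, StrongConvexOn T μ (g j)) :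
    StrongConvexOn {u : EuclideanSpace ℝ ι | ∀ j, u j ∈ T} μ (fun u => ∑ j, g j (u j)) := by
  refine ⟨fun u hu v hv a c ha hc hac j => (hg j).1 (hu j) (hv j) ha hc hac,
    fun u hu v hv a c ha hc hac => ?_⟩
  have hcoord (j : ι) := (hg j).2 (hu j) (hv j) ha hc hac
  simp only [smul_eq_mul, Real.norm_eq_abs, sq_abs] at hcoord
  simp only [PiLp.add_apply, PiLp.smul_apply, smul_eq_mul, EuclideanSpace.norm_sq_eq,
    Real.norm_eq_abs, sq_abs, PiLp.sub_apply, Finset.mul_sum, ← Finset.sum_sub_distrib,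
    ← Finset.sum_add_distrib]
  exact Finset.sum_le_sum fun j _ => (hcoord j).trans_eq (by ring)

lemma StrongConvexOn.comp_affineMap {E F : Type*} [NormedAddCommGroup E] [NormedSpace ℝ E]
    [NormedAddCommGroup F] [NormedSpace ℝ F] {S : Set E} {T : Set F} {μ : ℝ} {f : F → ℝ}
    (hf : StrongConvexOn T μ f) (hμ : 0 ≤ μ) {L : E →ᵃ[ℝ] F} {K : NNReal}
    (hL : AntilipschitzWith K L) (hS : Convex ℝ S) (hST : MapsTo L S T) :
    StrongConvexOn S (μ / K ^ 2) (f ∘ L) := by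
  refine ⟨hS, fun x hx z hz a c ha hc hac => ?_⟩
  have hmod : μ / K ^ 2 / 2 * ‖x - z‖ ^ 2 ≤ μ / 2 * ‖L x - L z‖ ^ 2 := by
    have hxz : ‖x - z‖ ≤ K * ‖L x - L z‖ := by
      simpa only [dist_eq_norm] using hL.le_mul_dist x z
    rcases eq_or_ne (K : ℝ) 0 with hK | hK
    · rw [hK, zero_pow two_ne_zero, div_zero, zero_div, zero_mul]; positivity
    calc μ / K ^ 2 / 2 * ‖x - z‖ ^ 2 ≤ μ / K ^ 2 / 2 * (K * ‖L x - L z‖) ^ 2 := by gcongr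
      _ = μ / 2 * ‖L x - L z‖ ^ 2 := by field_simp
  calc f (L (a • x + c • z)) = f (a • L x + c • L z) := by rw [Convex.combo_affine_apply hac]
    _ ≤ a • f (L x) + c • f (L z) - a * c * (μ / 2 * ‖L x - L z‖ ^ 2) :=
      hf.2 (hST hx) (hST hz) ha hc hac
    _ ≤ a • f (L x) + c • f (L z) - a * c * (μ / K ^ 2 / 2 * ‖x - z‖ ^ 2) := by gcongr

theorem stmt_15_general {m n : ℕ}
    (A : Matrix (Fin m) (Fin n) ℝ) (hA : ∀ i j, 0 ≤ A i j)
    (b : Fin m → ℝ) (hb : ∀ j, 0 < b j)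
    (y : Fin m → ℝ) (hy : ∀ j, 0 < y j)
    (hinj : Function.Injective (A.mulVec : (Fin n → ℝ) → (Fin m → ℝ)))
    (S : Set (EuclideanSpace ℝ (Fin n)))
    (hSb : Bornology.IsBounded S) (hSconv : Convex ℝ S)
    (hSsub : S ⊆ {x : EuclideanSpace ℝ (Fin n) | ∀ i, 0 ≤ x i}) :
    ∃ m₀ : ℝ, 0 < m₀ ∧
      ConvexOn ℝ S (fun x =>
        (∑ j, (y j * Real.log (y j / ((∑ i, A j i * x i) + b j)) +
          ((∑ i, A j i * x i) + b j) - y j)) - m₀ / 2 * ‖x‖ ^ 2) := by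
  let L : EuclideanSpace ℝ (Fin n) →ᵃ[ℝ] EuclideanSpace ℝ (Fin m) :=
    (Matrix.toLpLin 2 2 A).toAffineMap + AffineMap.const ℝ _ (WithLp.toLp 2 b)
  have hLx (x : EuclideanSpace ℝ (Fin n)) (j : Fin m) : L x j = ∑ i, A j i * x i + b j := rfl
  obtain ⟨K, hK0, hK⟩ := (Matrix.toLpLin 2 2 A).injective_iff_antilipschitz.1 fun x z hxz =>
    WithLp.ofLp_injective 2 (hinj (congrArg WithLp.ofLp hxz))
  have hLK : AntilipschitzWith K L := AntilipschitzWith.of_le_mul_dist fun x z => by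
    simpa [L, dist_add_right] using hK.le_mul_dist x z
  obtain ⟨M, hM, hLM⟩ := ((hSb.isCompact_closure.image
    (AffineMap.continuous_of_finiteDimensional L)).isBounded.subset
    (image_mono subset_closure)).exists_pos_norm_le
  have hLS : MapsTo L S {u | ∀ j, u j ∈ Ioc 0 M} := fun x hx j => by
    refine ⟨?_, (le_abs_self _).trans
      ((PiLp.norm_apply_le (L x) j).trans (hLM _ (mem_image_of_mem L hx)))⟩
    rw [hLx]
    exact (hb j).trans_le (le_add_of_nonneg_left
      (Finset.sum_nonneg fun i _ => mul_nonneg (hA j i) (hSsub hx i)))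
  obtain ⟨c, hc, hcy⟩ := exists_pos_forall_le_of_pos hy
  have hsum := strongConvexOn_sum_apply fun j =>
    (strongConvexOn_mul_log_div_add_sub (hy j) M).mono
      (div_le_div_of_nonneg_right (hcy j) (sq_nonneg M))
  have hD := hsum.comp_affineMap (by positivity) hLK hSconv hLS
  refine ⟨c / M ^ 2 / K ^ 2, by positivity,
    (strongConvexOn_iff_convex.1 hD).congr fun x _ => ?_⟩
  simp only [Function.comp_apply, hLx]

theorem stmt_15 {m n : ℕ} (hm : 0 < m) (hn : 0 < n)
    (A : Matrix (Fin m) (Fin n) ℝ) (hA : ∀ i j, 0 ≤ A i j)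
    (hAcol : ∀ j, ∑ i, A i j = 1)
    (b : Fin m → ℝ) (hb : ∀ j, 0 < b j)
    (y : Fin m → ℝ) (hy : ∀ j, 0 < y j)
    (hinj : Function.Injective (A.mulVec : (Fin n → ℝ) → (Fin m → ℝ)))
    (S : Set (EuclideanSpace ℝ (Fin n)))
    (hSb : Bornology.IsBounded S) (hSconv : Convex ℝ S)
    (hSsub : S ⊆ {x : EuclideanSpace ℝ (Fin n) | ∀ i, 0 ≤ x i}) :
    ∃ m₀ : ℝ, 0 < m₀ ∧
      ConvexOn ℝ S (fun x =>
        (∑ j, (y j * Real.log (y j / ((∑ i, A j i * x i) + b j)) +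
          ((∑ i, A j i * x i) + b j) - y j)) - m₀ / 2 * ‖x‖ ^ 2) :=
  stmt_15_general A hA b hb y hy hinj S hSb hSconv hSsub
end

section
/- The gradient of the generalized Kullback–Leibler divergence, ∇D_KL(x) = Aᵀ( e − y/(Ax+b) ), is Lipschitz continuous on the nonnegative orthant Ω = {x ∈ ℝⁿ : x ≥ 0} with Lipschitz constant L = ‖A‖² · max_{1≤j≤m} (y_j / b_j²), where ‖A‖ is the operator norm of the linear map x ↦ Ax with respect to the Euclidean norms. -/
/-!
Writing `u(x) = Ax + b`, the gradient is `Aᵀ (e - y / u(x))`, so the difference of two gradients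
is `Aᵀ w` with `w_j = y_j / u_j(z) - y_j / u_j(x)`. On the orthant `u_j ≥ b_j > 0`, where
`t ↦ y_j / t` is `y_j / b_j²`-Lipschitz; hence `|w_j| ≤ max_j (y_j / b_j²) · |(A (x - z))_j|`,
and the two factors `‖A‖` come from `‖Aᵀ‖ = ‖A‖` and `‖A (x - z)‖ ≤ ‖A‖ ‖x - z‖`.
-/

open Matrix

lemma abs_div_sub_div_le_of_le {y b u v : ℝ} (hy : 0 ≤ y) (hb : 0 < b) (hu : b ≤ u)
    (hv : b ≤ v) : |y / u - y / v| ≤ y / b ^ 2 * |u - v| := by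
  have hu0 : 0 < u := hb.trans_le hu
  have hv0 : 0 < v := hb.trans_le hv
  have huv : b ^ 2 ≤ u * v := by nlinarith
  calc |y / u - y / v| = y * |u - v| / (u * v) := by
        rw [div_sub_div _ _ hu0.ne' hv0.ne', abs_div, abs_of_pos (mul_pos hu0 hv0),
          show y * v - u * y = y * (v - u) by ring, abs_mul, abs_of_nonneg hy, abs_sub_comm]
    _ ≤ y * |u - v| / b ^ 2 := by gcongr
    _ = y / b ^ 2 * |u - v| := by ring

lemma EuclideanSpace.norm_le_mul_of_forall_norm_le {ι : Type*} [Fintype ι]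
    {v w : EuclideanSpace ℝ ι} {c : ℝ} (hc : 0 ≤ c) (h : ∀ i, ‖v i‖ ≤ c * ‖w i‖) :
    ‖v‖ ≤ c * ‖w‖ := by
  rw [EuclideanSpace.norm_eq, EuclideanSpace.norm_eq, ← Real.sqrt_sq hc,
    ← Real.sqrt_mul (sq_nonneg c), Finset.mul_sum]
  gcongr with i
  rw [← mul_pow]
  exact pow_le_pow_left₀ (norm_nonneg _) (h i) 2

lemma Matrix.norm_toLp_transpose_mulVec_le {m n : Type*} [Fintype m] [Fintype n]
    [DecidableEq m] [DecidableEq n] (A : Matrix m n ℝ) (w : EuclideanSpace ℝ m) :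
    ‖WithLp.toLp 2 (Aᵀ *ᵥ w)‖ ≤ ‖LinearMap.toContinuousLinearMap (toEuclideanLin A)‖ * ‖w‖ := by
  open scoped Matrix.Norms.L2Operator in
  have h := l2_opNorm_mulVec Aᴴ w
  rw [l2_opNorm_conjTranspose, conjTranspose_eq_transpose_of_trivial] at h
  exact h

theorem stmt_16_general {m n : ℕ}
    (A : Matrix (Fin m) (Fin n) ℝ) (hA : ∀ i j, 0 ≤ A i j)
    (b : Fin m → ℝ) (hb : ∀ j, 0 < b j)
    (y : Fin m → ℝ) (hy : ∀ j, 0 ≤ y j)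
    (gradDKL : EuclideanSpace ℝ (Fin n) → EuclideanSpace ℝ (Fin n))
    (hgrad : ∀ x, gradDKL x =
      (WithLp.toLp 2 (fun i => ∑ j, A j i * (1 - y j / ((∑ i', A j i' * x i') + b j))) :
        EuclideanSpace ℝ (Fin n)))
    (L : ℝ)
    (hL : L = ‖LinearMap.toContinuousLinearMap (Matrix.toEuclideanLin A)‖ ^ 2 *
      (⨆ j, y j / (b j) ^ 2)) :
    ∀ x z : EuclideanSpace ℝ (Fin n), (∀ i, 0 ≤ x i) → (∀ i, 0 ≤ z i) →
      ‖gradDKL x - gradDKL z‖ ≤ L * ‖x - z‖ := by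
  intro x z hx hz
  set T := LinearMap.toContinuousLinearMap (toEuclideanLin A)
  set C := ⨆ j, y j / b j ^ 2
  have hC : 0 ≤ C := Real.iSup_nonneg fun j => by have := hy j; positivity
  let u : EuclideanSpace ℝ (Fin n) → Fin m → ℝ := fun v j => (∑ i', A j i' * v i') + b j
  have hbu (v : EuclideanSpace ℝ (Fin n)) (hv : ∀ i, 0 ≤ v i) (j : Fin m) : b j ≤ u v j :=
    le_add_of_nonneg_left (Finset.sum_nonneg fun i _ => mul_nonneg (hA j i) (hv i))
  let w : EuclideanSpace ℝ (Fin m) := WithLp.toLp 2 fun j => y j / u z j - y j / u x j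
  have hgrad_sub : gradDKL x - gradDKL z = WithLp.toLp 2 (Aᵀ *ᵥ w) := by
    ext i
    simp [hgrad, w, u, mulVec, dotProduct, ← Finset.sum_sub_distrib, ← mul_sub]
  have hw : ‖w‖ ≤ C * ‖T (x - z)‖ := by
    refine EuclideanSpace.norm_le_mul_of_forall_norm_le hC fun j => ?_
    have hTj : T (x - z) j = u x j - u z j := by simp [T, u, mulVec, dotProduct]
    rw [hTj, Real.norm_eq_abs, Real.norm_eq_abs, abs_sub_comm (u x j)]
    refine (abs_div_sub_div_le_of_le (hy j) (hb j) (hbu z hz j) (hbu x hx j)).trans ?_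
    gcongr
    exact le_ciSup (f := fun j => y j / b j ^ 2) (Set.finite_range _).bddAbove j
  calc ‖gradDKL x - gradDKL z‖ ≤ ‖T‖ * ‖w‖ := hgrad_sub ▸ A.norm_toLp_transpose_mulVec_le w
    _ ≤ ‖T‖ * (C * (‖T‖ * ‖x - z‖)) := by
      gcongr
      exact hw.trans (by gcongr; exact T.le_opNorm _)
    _ = L * ‖x - z‖ := by rw [hL]; ring

theorem stmt_16 {m n : ℕ} (hm : 0 < m) (hn : 0 < n)
    (A : Matrix (Fin m) (Fin n) ℝ) (hA : ∀ i j, 0 ≤ A i j)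
    (hAcol : ∀ j, ∑ i, A i j = 1)
    (b : Fin m → ℝ) (hb : ∀ j, 0 < b j)
    (y : Fin m → ℝ) (hy : ∀ j, 0 ≤ y j)
    (gradDKL : EuclideanSpace ℝ (Fin n) → EuclideanSpace ℝ (Fin n))
    (hgrad : ∀ x, gradDKL x =
      (WithLp.toLp 2 (fun i => ∑ j, A j i * (1 - y j / ((∑ i', A j i' * x i') + b j))) :
        EuclideanSpace ℝ (Fin n)))
    (L : ℝ)
    (hL : L = ‖LinearMap.toContinuousLinearMap (Matrix.toEuclideanLin A)‖ ^ 2 *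
      (⨆ j, y j / (b j) ^ 2)) :
    ∀ x z : EuclideanSpace ℝ (Fin n), (∀ i, 0 ≤ x i) → (∀ i, 0 ≤ z i) →
      ‖gradDKL x - gradDKL z‖ ≤ L * ‖x - z‖ :=
  stmt_16_general A hA b hb y hy gradDKL hgrad L hL
end

section
/- The generalized Kullback–Leibler divergence D_KL is coercive on the nonnegative orthant: for every C ∈ ℝ there exists R > 0 such that D_KL(x) ≥ C for every x ∈ ℝⁿ with x ≥ 0 and ‖x‖ ≥ R. -/
/-!
From `log t ≥ 1 - 1/t` at `t = y / (c s)` each summand satisfies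
`y log (y / s) + s - y ≥ (1 - c) s + y log c` for every `c > 0`. Summing with `c = 1/2`, the
column sums of `A` being `1` turn `∑ⱼ (Ax)ⱼ` into `∑ᵢ xᵢ`, which dominates `‖x‖` on the
nonnegative orthant; so the divergence grows at least like `‖x‖ / 2`.
-/

open Finset Real

lemma mul_log_div_add_sub_ge {y s c : ℝ} (hy : 0 ≤ y) (hs : 0 < s) (hc : 0 < c) :
    (1 - c) * s + y * log c ≤ y * log (y / s) + s - y := by
  rcases hy.eq_or_lt with rfl | hy
  · simp only [zero_mul, add_zero, sub_zero]
    nlinarith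
  have hlog : 1 - c * s / y ≤ log (y / (c * s)) := by
    simpa [inv_div] using one_sub_inv_le_log_of_pos (show 0 < y / (c * s) by positivity)
  have hsplit : log (y / s) = log (y / (c * s)) + log c := by
    rw [log_div hy.ne' hs.ne', log_div hy.ne' (by positivity), log_mul hc.ne' hs.ne']; ring
  have hscaled := mul_le_mul_of_nonneg_left hlog hy.le
  rw [mul_sub, mul_one, mul_div_cancel₀ _ hy.ne'] at hscaled
  rw [hsplit, mul_add]
  linarith

lemma EuclideanSpace.norm_le_sum_of_nonneg {ι : Type*} [Fintype ι] (x : EuclideanSpace ℝ ι)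
    (hx : ∀ i, 0 ≤ x i) : ‖x‖ ≤ ∑ i, x i := by
  have hsum : 0 ≤ ∑ i, x i := sum_nonneg fun i _ => hx i
  refine (pow_le_pow_iff_left₀ (norm_nonneg x) hsum two_ne_zero).mp ?_
  rw [EuclideanSpace.real_norm_sq_eq]
  exact sum_sq_le_sq_sum_of_nonneg fun i _ => hx i

lemma sum_sum_mul_eq_sum_of_sum_col_eq_one {ι κ : Type*} [Fintype ι] [Fintype κ]
    {A : Matrix κ ι ℝ} (hA : ∀ i, ∑ k, A k i = 1) (x : ι → ℝ) :
    ∑ k, ∑ i, A k i * x i = ∑ i, x i := by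
  rw [sum_comm]
  simp_rw [← sum_mul, hA, one_mul]

lemma sum_mul_log_div_add_sub_ge {ι κ : Type*} [Fintype ι] [Fintype κ]
    {A : Matrix κ ι ℝ} (hA : ∀ k i, 0 ≤ A k i) (hAcol : ∀ i, ∑ k, A k i = 1)
    {b : κ → ℝ} (hb : ∀ k, 0 < b k) {y : κ → ℝ} (hy : ∀ k, 0 ≤ y k)
    {x : ι → ℝ} (hx : ∀ i, 0 ≤ x i) {c : ℝ} (hc : 0 < c) :
    (1 - c) * (∑ i, x i + ∑ k, b k) + log c * ∑ k, y k ≤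
      ∑ k, (y k * log (y k / (∑ i, A k i * x i + b k)) + (∑ i, A k i * x i + b k) - y k) := by
  have hs : ∀ k, 0 < ∑ i, A k i * x i + b k := fun k =>
    add_pos_of_nonneg_of_pos (sum_nonneg fun i _ => mul_nonneg (hA k i) (hx i)) (hb k)
  calc (1 - c) * (∑ i, x i + ∑ k, b k) + log c * ∑ k, y k
      = ∑ k, ((1 - c) * (∑ i, A k i * x i + b k) + y k * log c) := by
        rw [sum_add_distrib, ← mul_sum, sum_add_distrib, sum_sum_mul_eq_sum_of_sum_col_eq_one hAcol,
          ← sum_mul, mul_comm (log c)]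
    _ ≤ _ := sum_le_sum fun k _ => mul_log_div_add_sub_ge (hy k) (hs k) hc

theorem stmt_17_general {m n : ℕ}
    (A : Matrix (Fin m) (Fin n) ℝ) (hA : ∀ i j, 0 ≤ A i j)
    (hAcol : ∀ j, ∑ i, A i j = 1)
    (b : Fin m → ℝ) (hb : ∀ j, 0 < b j)
    (y : Fin m → ℝ) (hy : ∀ j, 0 ≤ y j) :
    ∀ C : ℝ, ∃ R : ℝ, 0 < R ∧
      ∀ x : EuclideanSpace ℝ (Fin n), (∀ i, 0 ≤ x i) → R ≤ ‖x‖ →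
        C ≤ ∑ j, (y j * Real.log (y j / ((∑ i, A j i * x i) + b j)) +
          ((∑ i, A j i * x i) + b j) - y j) := by
  intro C
  refine ⟨max 1 (2 * (C - log (1 / 2) * ∑ j, y j)), lt_max_of_lt_left one_pos, fun x hx hR => ?_⟩
  have hxR : 2 * (C - log (1 / 2) * ∑ j, y j) ≤ ∑ i, x i :=
    (le_max_right _ _).trans (hR.trans (EuclideanSpace.norm_le_sum_of_nonneg x hx))
  have hbsum : 0 ≤ ∑ j, b j := sum_nonneg fun j _ => (hb j).le
  have hlower := sum_mul_log_div_add_sub_ge hA hAcol hb hy (x := x.ofLp) hx one_half_pos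
  linarith

theorem stmt_17 {m n : ℕ} (hm : 0 < m) (hn : 0 < n)
    (A : Matrix (Fin m) (Fin n) ℝ) (hA : ∀ i j, 0 ≤ A i j)
    (hAcol : ∀ j, ∑ i, A i j = 1)
    (b : Fin m → ℝ) (hb : ∀ j, 0 < b j)
    (y : Fin m → ℝ) (hy : ∀ j, 0 ≤ y j) :
    ∀ C : ℝ, ∃ R : ℝ, 0 < R ∧
      ∀ x : EuclideanSpace ℝ (Fin n), (∀ i, 0 ≤ x i) → R ≤ ‖x‖ →
        C ≤ ∑ j, (y j * Real.log (y j / ((∑ i, A j i * x i) + b j)) +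
          ((∑ i, A j i * x i) + b j) - y j) :=
  stmt_17_general A hA hAcol b hb y hy
end
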